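/- arXiv:1607.08536 — 8 statements merged into one kernel-verified Lean document; each statement's English description precedes it below -/
import Mathlib

section
/- Let a > 0, let ρ ∈ (a, ∞], and let u : [a, ρ) → ℝ be twice continuously differentiable with u(a) = 0, u'(a) = α > 0, u(r) > 0 for all r ∈ (a, ρ), and suppose u satisfies the Pucci differential inequalities at every r ∈ (a, ρ). Assume moreover that either ρ = ∞, or ρ < ∞ and u(r) → 0 as r → ρ⁻. Then there exists a unique τ ∈ (a, ρ) such that u'(r) > 0 for all r ∈ [a, τ), u'(τ) = 0, and u'(r) < 0 for all r ∈ (τ, ρ). -/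
open Real Set

/-- `P⁺[u](r)`: the Pucci maximal operator `𝓜⁺_{λ,Λ}` evaluated on the Hessian of the
radial function `v(x) = u(|x|)`, expressed through `u'` and `u''`. -/
noncomputable def Pp (n : ℕ) (lam Lam : ℝ) (u' u'' : ℝ → ℝ) (r : ℝ) : ℝ :=
  Lam * max (u'' r) 0 + lam * min (u'' r) 0 +
    ((n : ℝ) - 1) * (Lam * max (u' r / r) 0 + lam * min (u' r / r) 0)

/-- `P⁻[u](r)`: the Pucci minimal operator `𝓜⁻_{λ,Λ}` evaluated on the Hessian of the
radial function `v(x) = u(|x|)`. -/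
noncomputable def Pm (n : ℕ) (lam Lam : ℝ) (u' u'' : ℝ → ℝ) (r : ℝ) : ℝ :=
  lam * max (u'' r) 0 + Lam * min (u'' r) 0 +
    ((n : ℝ) - 1) * (lam * max (u' r / r) 0 + Lam * min (u' r / r) 0)

/-- `u` satisfies the Pucci differential inequalities at `r`:
`−P⁺[u](r) ≤ |u(r)|^{p−1}u(r) ≤ −P⁻[u](r)`. -/
def PucciIneq (n : ℕ) (lam Lam p : ℝ) (u u' u'' : ℝ → ℝ) (r : ℝ) : Prop :=
  -Pp n lam Lam u' u'' r ≤ |u r| ^ (p - 1) * u r ∧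
    |u r| ^ (p - 1) * u r ≤ -Pm n lam Lam u' u'' r

private lemma key_max_min {lam Lam K x : ℝ} (hlam : 0 < lam) (hlL : lam ≤ Lam)
    (hK : 0 < K) (h : lam * max x 0 + Lam * min x 0 ≤ -K) : Lam * x ≤ -K := by
  have hLam : 0 < Lam := lt_of_lt_of_le hlam hlL
  rcases le_total 0 x with hx | hx
  · rw [max_eq_left hx, min_eq_right hx] at h
    nlinarith
  · rw [max_eq_right hx, min_eq_left hx] at h
    linarith

private lemma eventually_neg_right {f : ℝ → ℝ} {f' x : ℝ} (h : HasDerivAt f f' x)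
    (hx : f x = 0) (hf' : f' < 0) : ∀ᶠ r in nhdsWithin x (Set.Ioi x), f r < 0 := by
  have hs := hasDerivAt_iff_tendsto_slope.mp h
  have h1 : ∀ᶠ r in nhdsWithin x {x}ᶜ, slope f x r < 0 := hs.eventually (eventually_lt_nhds hf')
  have h2 : ∀ᶠ r in nhdsWithin x (Set.Ioi x), slope f x r < 0 :=
    h1.filter_mono (nhdsWithin_mono x (fun r hr => (ne_of_gt hr : r ≠ x)))
  filter_upwards [h2, self_mem_nhdsWithin] with r hr hr'
  rw [slope_def_field, hx, sub_zero] at hr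
  have hrx : (0:ℝ) < r - x := sub_pos.mpr hr'
  rcases div_neg_iff.mp hr with ⟨_, h2⟩ | ⟨h1', _⟩
  · linarith
  · exact h1'

private lemma eventually_pos_left {f : ℝ → ℝ} {f' x : ℝ} (h : HasDerivAt f f' x)
    (hx : f x = 0) (hf' : f' < 0) : ∀ᶠ r in nhdsWithin x (Set.Iio x), 0 < f r := by
  have hs := hasDerivAt_iff_tendsto_slope.mp h
  have h1 : ∀ᶠ r in nhdsWithin x {x}ᶜ, slope f x r < 0 := hs.eventually (eventually_lt_nhds hf')
  have h2 : ∀ᶠ r in nhdsWithin x (Set.Iio x), slope f x r < 0 :=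
    h1.filter_mono (nhdsWithin_mono x (fun r hr => (ne_of_lt hr : r ≠ x)))
  filter_upwards [h2, self_mem_nhdsWithin] with r hr hr'
  rw [slope_def_field, hx, sub_zero] at hr
  have hrx : r - x < 0 := sub_neg.mpr hr'
  rcases div_neg_iff.mp hr with ⟨h1', _⟩ | ⟨_, h2'⟩
  · exact h1'
  · linarith

/-- Lemma 2.1 (paper): a positive radial arc starting at zero with positive slope and
satisfying the Pucci differential inequalities on `(a, ρ)` (where `ρ ≤ ∞` and `u → 0`
at `ρ` if `ρ < ∞`) has a unique critical point `τ`, is increasing before and decreasing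
after it. -/
theorem unique_maximum_point_of_positive_radial_arc
    (n : ℕ) (hn : 2 ≤ n) (lam Lam p : ℝ) (hlam : 0 < lam) (hlL : lam ≤ Lam) (hp : 1 < p)
    (a α : ℝ) (ha : 0 < a) (hα : 0 < α)
    (ρ : WithTop ℝ) (haρ : (a : WithTop ℝ) < ρ)
    (u u' u'' : ℝ → ℝ)
    (hu : ∀ r : ℝ, a ≤ r → (r : WithTop ℝ) < ρ → HasDerivAt u (u' r) r)
    (hu' : ∀ r : ℝ, a ≤ r → (r : WithTop ℝ) < ρ → HasDerivAt u' (u'' r) r)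
    (hu'' : ContinuousOn u'' {r : ℝ | a ≤ r ∧ (r : WithTop ℝ) < ρ})
    (hua : u a = 0) (hu'a : u' a = α)
    (hpos : ∀ r : ℝ, a < r → (r : WithTop ℝ) < ρ → 0 < u r)
    (hPucci : ∀ r : ℝ, a < r → (r : WithTop ℝ) < ρ → PucciIneq n lam Lam p u u' u'' r)
    (hend : ρ = ⊤ ∨ ∃ ρ' : ℝ, ρ = (ρ' : WithTop ℝ) ∧
      Filter.Tendsto u (nhdsWithin ρ' (Set.Iio ρ')) (nhds 0)) :
    ∃! τ : ℝ, a < τ ∧ (τ : WithTop ℝ) < ρ ∧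
      (∀ r : ℝ, a ≤ r → r < τ → 0 < u' r) ∧ u' τ = 0 ∧
      (∀ r : ℝ, τ < r → (r : WithTop ℝ) < ρ → u' r < 0) := by
  have hLam : 0 < Lam := lt_of_lt_of_le hlam hlL
  have hn1 : (1:ℝ) ≤ (n:ℝ) - 1 := by
    have : (2:ℝ) ≤ (n:ℝ) := by exact_mod_cast hn
    linarith
  have hlt : ∀ {x z : ℝ}, x ≤ z → (z:WithTop ℝ) < ρ → (x:WithTop ℝ) < ρ := by
    intro x z hxz hz
    exact lt_of_le_of_lt (by exact_mod_cast hxz) hz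
  have hRHS : ∀ r, a < r → (r:WithTop ℝ) < ρ → 0 < |u r| ^ (p-1) * u r := fun r h1 h2 =>
    mul_pos (Real.rpow_pos_of_pos (abs_pos.mpr (ne_of_gt (hpos r h1 h2))) _) (hpos r h1 h2)
  -- at a critical point, u'' < 0
  have hA : ∀ r, a < r → (r:WithTop ℝ) < ρ → u' r = 0 → u'' r < 0 := by
    intro r h1 h2 h0
    have hP := (hPucci r h1 h2).2
    have hK := hRHS r h1 h2
    simp only [Pm, h0, zero_div, max_self, min_self, mul_zero, add_zero] at hP
    have hPm : lam * max (u'' r) 0 + Lam * min (u'' r) 0 ≤ -(|u r| ^ (p-1) * u r) := by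
      linarith
    have := key_max_min hlam hlL hK hPm
    nlinarith
  -- where u' > 0, a quantitative bound for u''
  have hB : ∀ r, a < r → (r:WithTop ℝ) < ρ → 0 < u' r →
      Lam * u'' r ≤ -(|u r| ^ (p-1) * u r) := by
    intro r h1 h2 h3
    have hP := (hPucci r h1 h2).2
    have hK := hRHS r h1 h2
    have hr0 : (0:ℝ) < r := lt_trans ha h1
    have hq : 0 < u' r / r := div_pos h3 hr0
    have hterm : 0 ≤ ((n:ℝ) - 1) * (lam * max (u' r / r) 0 + Lam * min (u' r / r) 0) := by
      rw [max_eq_left hq.le, min_eq_right hq.le]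
      have h4 : 0 ≤ lam * (u' r / r) := le_of_lt (mul_pos hlam hq)
      nlinarith
    simp only [Pm] at hP
    have hPm : lam * max (u'' r) 0 + Lam * min (u'' r) 0 ≤ -(|u r| ^ (p-1) * u r) := by
      linarith
    exact key_max_min hlam hlL hK hPm
  have hcontu' : ∀ {s t : ℝ}, a ≤ s → (t:WithTop ℝ) < ρ → ContinuousOn u' (Icc s t) := by
    intro s t hs ht x hx
    exact ((hu' x (le_trans hs hx.1) (hlt hx.2 ht)).continuousAt).continuousWithinAt
  have hIVT : ∀ s t, a ≤ s → s ≤ t → (t:WithTop ℝ) < ρ → u' s ≤ 0 → 0 ≤ u' t →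
      ∃ c ∈ Icc s t, u' c = 0 := by
    intro s t h1 h2 h3 h4 h5
    obtain ⟨c, hc, hc0⟩ := intermediate_value_Icc h2 (hcontu' h1 h3) ⟨h4, h5⟩
    exact ⟨c, hc, hc0⟩
  have hIVT' : ∀ s t, a ≤ s → s ≤ t → (t:WithTop ℝ) < ρ → 0 ≤ u' s → u' t ≤ 0 →
      ∃ c ∈ Icc s t, u' c = 0 := by
    intro s t h1 h2 h3 h4 h5
    obtain ⟨c, hc, hc0⟩ := intermediate_value_Icc' h2 (hcontu' h1 h3) ⟨h5, h4⟩
    exact ⟨c, hc, hc0⟩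
  -- if u' never vanishes, it is positive throughout
  have hposIfNoZero : (∀ z, a < z → (z:WithTop ℝ) < ρ → u' z ≠ 0) →
      ∀ r, a ≤ r → (r:WithTop ℝ) < ρ → 0 < u' r := by
    intro hz r h1 h2
    by_contra hle
    push_neg at hle
    rcases eq_or_lt_of_le h1 with rfl | h1'
    · rw [hu'a] at hle; linarith
    · obtain ⟨c, hc, hc0⟩ := hIVT' a r le_rfl h1'.le h2 (by rw [hu'a]; exact hα.le) hle
      have hca : a < c := lt_of_le_of_ne hc.1 (by
        rintro rfl
        rw [hu'a] at hc0
        linarith)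
      exact hz c hca (hlt hc.2 h2) hc0
  -- existence of a critical point
  have hexZero : ∃ z, a < z ∧ (z:WithTop ℝ) < ρ ∧ u' z = 0 := by
    by_contra hno
    push_neg at hno
    have hpos' := hposIfNoZero hno
    rcases hend with hT | ⟨ρ', hρ', hlim⟩
    · subst hT
      have hall : ∀ r : ℝ, (r:WithTop ℝ) < ⊤ := fun r => WithTop.coe_lt_top r
      set r0 := a + 1 with hr0def
      have hr0a : a < r0 := by linarith
      have hc : 0 < u r0 := hpos r0 hr0a (hall r0)
      have hmono : MonotoneOn u (Ici a) := by
        apply monotoneOn_of_deriv_nonneg (convex_Ici a)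
        · intro x hx
          exact ((hu x hx (hall x)).continuousAt).continuousWithinAt
        · intro x hx
          rw [interior_Ici] at hx
          exact ((hu x hx.le (hall x)).differentiableAt).differentiableWithinAt
        · intro x hx
          rw [interior_Ici] at hx
          rw [(hu x hx.le (hall x)).deriv]
          exact (hpos' x hx.le (hall x)).le
      have hKpos : 0 < u r0 ^ (p-1) * u r0 := mul_pos (Real.rpow_pos_of_pos hc _) hc
      have hub : ∀ r, r0 ≤ r → u r0 ^ (p-1) * u r0 ≤ |u r| ^ (p-1) * u r := by
        intro r hr
        have hur : u r0 ≤ u r :=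
          hmono (mem_Ici.mpr hr0a.le) (mem_Ici.mpr (le_trans hr0a.le hr)) hr
        have hurpos : 0 < u r := lt_of_lt_of_le hc hur
        rw [abs_of_pos hurpos]
        exact mul_le_mul (Real.rpow_le_rpow hc.le hur (by linarith)) hur hc.le
          (Real.rpow_nonneg hurpos.le _)
      set k := (u r0 ^ (p-1) * u r0) / Lam with hk
      have hkpos : 0 < k := div_pos hKpos hLam
      have hkK : k * Lam = u r0 ^ (p-1) * u r0 := div_mul_cancel₀ _ hLam.ne'
      have hu''le : ∀ r, r0 ≤ r → u'' r ≤ -k := by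
        intro r hr
        have h1 : a < r := lt_of_lt_of_le hr0a hr
        have hBr := hB r h1 (hall r) (hpos' r h1.le (hall r))
        have h2 := hub r hr
        nlinarith
      have hg : AntitoneOn (fun r => u' r + k * r) (Ici r0) := by
        apply antitoneOn_of_deriv_nonpos (convex_Ici r0)
        · intro x hx
          exact (((hu' x (le_trans hr0a.le hx) (hall x)).continuousAt).add
            ((continuous_const.mul continuous_id).continuousAt)).continuousWithinAt
        · intro x hx
          rw [interior_Ici] at hx
          exact (((hu' x (le_trans hr0a.le hx.le) (hall x)).add
            ((hasDerivAt_id x).const_mul k)).differentiableAt).differentiableWithinAt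
        · intro x hx
          rw [interior_Ici] at hx
          have hd : HasDerivAt (fun r => u' r + k * r) (u'' x + k * 1) x :=
            (hu' x (le_trans hr0a.le hx.le) (hall x)).add ((hasDerivAt_id x).const_mul k)
          rw [hd.deriv]
          have := hu''le x hx.le
          linarith
      have hu'r0 : 0 < u' r0 := hpos' r0 hr0a.le (hall r0)
      set R := r0 + (u' r0 + 1) / k with hR
      have hq : 0 < (u' r0 + 1) / k := div_pos (by linarith) hkpos
      have hRr0 : r0 ≤ R := by rw [hR]; linarith
      have hgR := hg (mem_Ici.mpr le_rfl) (mem_Ici.mpr hRr0) hRr0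
      simp only at hgR
      have hkq : k * ((u' r0 + 1) / k) = u' r0 + 1 := mul_div_cancel₀ _ hkpos.ne'
      rw [hR, mul_add, hkq] at hgR
      have hu'R : 0 < u' R := hpos' R (le_trans hr0a.le hRr0) (hall R)
      rw [hR] at hu'R
      linarith
    · subst hρ'
      have haρ' : a < ρ' := by exact_mod_cast haρ
      set m := (a + ρ')/2 with hm
      have ham : a < m := by rw [hm]; linarith
      have hmρ : m < ρ' := by rw [hm]; linarith
      have hcoe : ∀ {x : ℝ}, x < ρ' → (x:WithTop ℝ) < (ρ':WithTop ℝ) := by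
        intro x hx; exact_mod_cast hx
      have hmono : MonotoneOn u (Ico a ρ') := by
        apply monotoneOn_of_deriv_nonneg (convex_Ico a ρ')
        · intro x hx
          exact ((hu x hx.1 (hcoe hx.2)).continuousAt).continuousWithinAt
        · intro x hx
          rw [interior_Ico] at hx
          exact ((hu x hx.1.le (hcoe hx.2)).differentiableAt).differentiableWithinAt
        · intro x hx
          rw [interior_Ico] at hx
          rw [(hu x hx.1.le (hcoe hx.2)).deriv]
          exact (hpos' x hx.1.le (hcoe hx.2)).le
      have hev : ∀ᶠ r in nhdsWithin ρ' (Iio ρ'), u m ≤ u r := by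
        filter_upwards [Ioo_mem_nhdsLT_of_mem (show ρ' ∈ Ioc m ρ' from ⟨hmρ, le_rfl⟩)] with r hr
        exact hmono ⟨ham.le, hmρ⟩ ⟨le_trans ham.le hr.1.le, hr.2⟩ hr.1.le
      have hum : 0 < u m := hpos m ham (hcoe hmρ)
      have := ge_of_tendsto hlim hev
      linarith
  obtain ⟨z, hza, hzρ, hz0⟩ := hexZero
  set S := {r : ℝ | r ∈ Icc a z ∧ u' r = 0} with hSdef
  have hzS : z ∈ S := ⟨⟨hza.le, le_rfl⟩, hz0⟩
  have hSne : S.Nonempty := ⟨z, hzS⟩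
  have hSbdd : BddBelow S := ⟨a, fun x hx => hx.1.1⟩
  have hSclosed : IsClosed S := by
    have hSeq : S = Icc a z ∩ u' ⁻¹' {0} := by
      ext x
      rw [hSdef]
      simp only [Set.mem_setOf_eq, Set.mem_inter_iff, Set.mem_preimage, Set.mem_singleton_iff]
    rw [hSeq]
    exact ContinuousOn.preimage_isClosed_of_isClosed (hcontu' le_rfl hzρ) isClosed_Icc
      isClosed_singleton
  set τ := sInf S with hτdef
  have hτS : τ ∈ S := hSclosed.csInf_mem hSne hSbdd
  have hτa : a < τ := lt_of_le_of_ne hτS.1.1 (by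
    intro h
    have := hτS.2
    rw [← h, hu'a] at this
    linarith)
  have hτρ : (τ:WithTop ℝ) < ρ := hlt hτS.1.2 hzρ
  have hbefore : ∀ r, a ≤ r → r < τ → 0 < u' r := by
    intro r h1 h2
    by_contra hle
    push_neg at hle
    have hrz : r ≤ z := le_trans h2.le hτS.1.2
    have h2ρ : (r:WithTop ℝ) < ρ := hlt hrz hzρ
    obtain ⟨c, hc, hc0⟩ := hIVT' a r le_rfl h1 h2ρ (by rw [hu'a]; exact hα.le) hle
    have : τ ≤ c := csInf_le hSbdd ⟨⟨hc.1, le_trans hc.2 hrz⟩, hc0⟩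
    linarith [hc.2]
  have hτ'' : u'' τ < 0 := hA τ hτa hτρ hτS.2
  have hafter : ∀ s, τ < s → (s:WithTop ℝ) < ρ → u' s < 0 := by
    intro s hτs hsρ
    by_contra hge
    push_neg at hge
    have hev := eventually_neg_right (hu' τ hτa.le hτρ) hτS.2 hτ''
    obtain ⟨w, hwneg, hwIoo⟩ := (hev.and (Filter.eventually_of_mem
      (Ioo_mem_nhdsGT_of_mem ⟨le_rfl, hτs⟩) (fun x hx => hx))).exists
    have hwa : a < w := lt_trans hτa hwIoo.1
    obtain ⟨c0, hc0mem, hc00⟩ := hIVT w s hwa.le hwIoo.2.le hsρ hwneg.le hge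
    set Z := {r : ℝ | r ∈ Icc w s ∧ u' r = 0} with hZdef
    have hZne : Z.Nonempty := ⟨c0, hc0mem, hc00⟩
    have hZbdd : BddBelow Z := ⟨w, fun x hx => hx.1.1⟩
    have hZclosed : IsClosed Z := by
      have hZeq : Z = Icc w s ∩ u' ⁻¹' {0} := by
        ext x
        rw [hZdef]
        simp only [Set.mem_setOf_eq, Set.mem_inter_iff, Set.mem_preimage, Set.mem_singleton_iff]
      rw [hZeq]
      exact ContinuousOn.preimage_isClosed_of_isClosed (hcontu' hwa.le hsρ) isClosed_Icc
        isClosed_singleton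
    set c := sInf Z with hcdef
    have hcZ : c ∈ Z := hZclosed.csInf_mem hZne hZbdd
    have hwc : w < c := lt_of_le_of_ne hcZ.1.1 (by
      intro h
      have := hcZ.2
      rw [← h] at this
      linarith)
    have hca : a < c := lt_trans hwa hwc
    have hcρ : (c:WithTop ℝ) < ρ := hlt hcZ.1.2 hsρ
    have hc'' : u'' c < 0 := hA c hca hcρ hcZ.2
    have hevl := eventually_pos_left (hu' c hca.le hcρ) hcZ.2 hc''
    obtain ⟨r, hrpos, hrIoo⟩ := (hevl.and (Filter.eventually_of_mem
      (Ioo_mem_nhdsLT_of_mem ⟨hwc, le_rfl⟩) (fun x hx => hx))).exists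
    obtain ⟨d, hdmem, hd0⟩ := hIVT w r hwa.le hrIoo.1.le
      (hlt (le_trans hrIoo.2.le hcZ.1.2) hsρ) hwneg.le hrpos.le
    have : c ≤ d := csInf_le hZbdd ⟨⟨hdmem.1, le_trans hdmem.2 (le_trans hrIoo.2.le hcZ.1.2)⟩, hd0⟩
    linarith [hdmem.2, hrIoo.2]
  refine ⟨τ, ⟨hτa, hτρ, hbefore, hτS.2, hafter⟩, ?_⟩
  rintro τ' ⟨hτ'a, hτ'ρ, hbef', h0', haft'⟩
  rcases lt_trichotomy τ' τ with h | h | h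
  · exact absurd h0' (ne_of_gt (hbefore τ' hτ'a.le h))
  · exact h
  · exact absurd h0' (ne_of_lt (hafter τ' h hτ'ρ))
end

section
/- Assume ñ > 2. Let 0 < τ < ρ ≤ ∞ and let u : [τ, ρ) → ℝ be twice continuously differentiable with u(r) > 0 and u'(r) ≤ 0 for all r ∈ [τ, ρ), satisfying the Pucci differential inequalities at every r ∈ [τ, ρ). Then the energy function E₁(r) = r^{2(ñ−1)}·(u'(r)²/2 + u(r)^{p+1}/(Λ(p+1))) is strictly increasing on [τ, ρ), and the energy function E₂(r) = u'(r)²/2 + u(r)^{p+1}/(λ(p+1)) is nonincreasing on [τ, ρ). -/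
open Real Set

/-!
Because `u' ≤ 0`, the terms `u'/r` in both Pucci operators have a known sign and the two
inequalities become bounds on `u''` alone: `0 ≤ u'' + u^p/λ` and
`u'' + u^p/Λ ≤ -(ñ-1) u'/r`. Now `E₂' = u'(u'' + u^p/λ) ≤ 0`, while
`r^{1-2(ñ-1)} E₁' = (ñ-1)u'² + 2(ñ-1)u^{p+1}/(Λ(p+1)) + r u'(u'' + u^p/Λ)`, in which the second
bound makes the first and last terms add up to something nonnegative.
-/

lemma strictMonoOn_of_hasDerivAt_pos {D : Set ℝ} (hD : Convex ℝ D) {f f' : ℝ → ℝ}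
    (hf : ∀ x ∈ D, HasDerivAt f (f' x) x) (hf'₀ : ∀ x ∈ D, 0 < f' x) : StrictMonoOn f D :=
  strictMonoOn_of_hasDerivWithinAt_pos hD
    (fun x hx ↦ (hf x hx).continuousAt.continuousWithinAt)
    (fun x hx ↦ (hf x (interior_subset hx)).hasDerivWithinAt)
    (fun x hx ↦ hf'₀ x (interior_subset hx))

lemma antitoneOn_of_hasDerivAt_nonpos {D : Set ℝ} (hD : Convex ℝ D) {f f' : ℝ → ℝ}
    (hf : ∀ x ∈ D, HasDerivAt f (f' x) x) (hf'₀ : ∀ x ∈ D, f' x ≤ 0) : AntitoneOn f D :=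
  antitoneOn_of_hasDerivWithinAt_nonpos hD
    (fun x hx ↦ (hf x hx).continuousAt.continuousWithinAt)
    (fun x hx ↦ (hf x (interior_subset hx)).hasDerivWithinAt)
    (fun x hx ↦ hf'₀ x (interior_subset hx))

lemma convex_Ici_inter_coe_lt (τ : ℝ) (ρ : WithTop ℝ) :
    Convex ℝ {r : ℝ | τ ≤ r ∧ (r : WithTop ℝ) < ρ} :=
  (ordConnected_Ici.inter (ordConnected_Iio.preimage_mono WithTop.coe_mono)).convex

lemma abs_rpow_sub_one_mul_self {x : ℝ} (hx : 0 < x) (p : ℝ) : |x| ^ (p - 1) * x = x ^ p := by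
  rw [abs_of_pos hx, ← rpow_add_one hx.ne', sub_add_cancel]

section Pucci

variable {n : ℕ} {lam Lam p : ℝ} {u u' u'' : ℝ → ℝ} {r : ℝ}

lemma PucciIneq.le_add_div_lam (h : PucciIneq n lam Lam p u u' u'' r) (hn : 1 ≤ n)
    (hlam : 0 < lam) (hr : 0 < r) (hu : 0 < u r) (hu' : u' r ≤ 0) : 0 ≤ u'' r + u r ^ p / lam := by
  have hb : u' r / r ≤ 0 := div_nonpos_of_nonpos_of_nonneg hu' hr.le
  have hn1 : (0 : ℝ) ≤ n - 1 := by rw [sub_nonneg]; exact_mod_cast hn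
  have hP := h.1
  rw [abs_rpow_sub_one_mul_self hu, Pp, max_eq_right hb, min_eq_left hb] at hP
  rw [← mul_le_mul_iff_right₀ hlam, mul_zero, mul_add, mul_div_cancel₀ _ hlam.ne']
  rcases le_total 0 (u'' r) with ha | ha
  · rw [max_eq_left ha, min_eq_right ha] at hP
    positivity
  · rw [max_eq_right ha, min_eq_left ha] at hP
    nlinarith [mul_nonneg hn1 (mul_nonneg hlam.le (neg_nonneg.2 hb))]

lemma PucciIneq.add_div_Lam_le (h : PucciIneq n lam Lam p u u' u'' r) (hn : 1 ≤ n)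
    (hlam : 0 < lam) (hlL : lam ≤ Lam) (hr : 0 < r) (hu : 0 < u r) (hu' : u' r ≤ 0) :
    u'' r + u r ^ p / Lam ≤ -(Lam / lam * (n - 1)) * (u' r / r) := by
  have hLam : 0 < Lam := hlam.trans_le hlL
  have hb : u' r / r ≤ 0 := div_nonpos_of_nonpos_of_nonneg hu' hr.le
  have hn1 : (0 : ℝ) ≤ n - 1 := by rw [sub_nonneg]; exact_mod_cast hn
  have hf : 0 < u r ^ p := rpow_pos_of_pos hu p
  have hP := h.2
  rw [abs_rpow_sub_one_mul_self hu, Pm, max_eq_right hb, min_eq_left hb] at hP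
  have hcleared : lam * Lam * u'' r + lam * u r ^ p ≤ -(Lam ^ 2 * (n - 1)) * (u' r / r) := by
    have hbn : 0 ≤ (n - 1) * -(u' r / r) := mul_nonneg hn1 (neg_nonneg.2 hb)
    rcases le_total 0 (u'' r) with ha | ha
    · rw [max_eq_left ha, min_eq_right ha] at hP
      nlinarith [mul_le_mul_of_nonneg_left hlL hf.le]
    · rw [max_eq_right ha, min_eq_left ha] at hP
      nlinarith [mul_le_mul_of_nonneg_right hlL (mul_nonneg hLam.le hbn)]
  calc u'' r + u r ^ p / Lam = (lam * Lam * u'' r + lam * u r ^ p) / (lam * Lam) := by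
        field_simp
    _ ≤ -(Lam ^ 2 * (n - 1)) * (u' r / r) / (lam * Lam) := by gcongr
    _ = -(Lam / lam * (n - 1)) * (u' r / r) := by field_simp

end Pucci

lemma HasDerivAt.rpow_mul_of_ne_zero {E : ℝ → ℝ} {E' r : ℝ} (hE : HasDerivAt E E' r) (hr : r ≠ 0)
    (k : ℝ) : HasDerivAt (fun x ↦ x ^ k * E x) (r ^ (k - 1) * (k * E r + r * E')) r := by
  refine ((hasDerivAt_rpow_const (p := k) (Or.inl hr)).mul hE).congr_deriv ?_
  rw [mul_add, ← mul_assoc (r ^ (k - 1)) r, ← rpow_add_one hr, sub_add_cancel]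
  ring

noncomputable def radialEnergy (c p : ℝ) (u u' : ℝ → ℝ) (r : ℝ) : ℝ :=
  u' r ^ 2 / 2 + u r ^ (p + 1) / (c * (p + 1))

section Energy

variable {c p : ℝ} {u u' u'' : ℝ → ℝ} {r : ℝ}

lemma hasDerivAt_radialEnergy (hu : HasDerivAt u (u' r) r) (hu' : HasDerivAt u' (u'' r) r)
    (hur : u r ≠ 0) (hp : p + 1 ≠ 0) :
    HasDerivAt (radialEnergy c p u u') (u' r * (u'' r + u r ^ p / c)) r := by
  refine (((hu'.pow 2).div_const 2).add
    ((hu.rpow_const (Or.inl hur)).div_const (c * (p + 1)))).congr_deriv ?_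
  rw [add_sub_cancel_right]
  field_simp
  ring

lemma rpow_mul_radialEnergy_deriv_pos {m : ℝ} (hr : 0 < r) (hm : 0 < m) (hc : 0 < c)
    (hp : 0 < p + 1) (hur : 0 < u r) (hu' : u' r ≤ 0)
    (h : u'' r + u r ^ p / c ≤ -m * (u' r / r)) :
    0 < r ^ (2 * m - 1) *
      (2 * m * radialEnergy c p u u' r + r * (u' r * (u'' r + u r ^ p / c))) := by
  have hU : 0 < u r ^ (p + 1) / (c * (p + 1)) :=
    div_pos (rpow_pos_of_pos hur _) (mul_pos hc hp)
  have hlow : -m * u' r ^ 2 ≤ r * (u' r * (u'' r + u r ^ p / c)) := by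
    calc -m * u' r ^ 2 = r * (u' r * (-m * (u' r / r))) := by field_simp
      _ ≤ r * (u' r * (u'' r + u r ^ p / c)) :=
        mul_le_mul_of_nonneg_left (mul_le_mul_of_nonpos_left h hu') hr.le
  refine mul_pos (rpow_pos_of_pos hr _) ?_
  unfold radialEnergy
  nlinarith [mul_pos hm hU]

end Energy

theorem energy_monotonicity_general
    (n : ℕ) (hn : 2 ≤ n) (lam Lam p ntil : ℝ) (hlam : 0 < lam) (hlL : lam ≤ Lam) (hp : 1 < p)
    (hnt : ntil = Lam / lam * ((n : ℝ) - 1) + 1)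
    (τ : ℝ) (hτ : 0 < τ) (ρ : WithTop ℝ)
    (u u' u'' : ℝ → ℝ)
    (hu : ∀ r : ℝ, τ ≤ r → (r : WithTop ℝ) < ρ → HasDerivAt u (u' r) r)
    (hu' : ∀ r : ℝ, τ ≤ r → (r : WithTop ℝ) < ρ → HasDerivAt u' (u'' r) r)
    (hpos : ∀ r : ℝ, τ ≤ r → (r : WithTop ℝ) < ρ → 0 < u r)
    (hdec : ∀ r : ℝ, τ ≤ r → (r : WithTop ℝ) < ρ → u' r ≤ 0)
    (hPucci : ∀ r : ℝ, τ ≤ r → (r : WithTop ℝ) < ρ → PucciIneq n lam Lam p u u' u'' r) :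
    StrictMonoOn
      (fun r : ℝ => r ^ (2 * (ntil - 1)) * (u' r ^ 2 / 2 + u r ^ (p + 1) / (Lam * (p + 1))))
      {r : ℝ | τ ≤ r ∧ (r : WithTop ℝ) < ρ} ∧
    AntitoneOn (fun r : ℝ => u' r ^ 2 / 2 + u r ^ (p + 1) / (lam * (p + 1)))
      {r : ℝ | τ ≤ r ∧ (r : WithTop ℝ) < ρ} := by
  have hn1 : 1 ≤ n := by omega
  have hLam : 0 < Lam := hlam.trans_le hlL
  have hm : 0 < ntil - 1 := by
    have : (1 : ℝ) ≤ n - 1 := by rw [le_sub_iff_add_le]; exact_mod_cast hn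
    rw [hnt, add_sub_cancel_right]
    positivity
  have hE : ∀ c, ∀ r, τ ≤ r → (r : WithTop ℝ) < ρ →
      HasDerivAt (radialEnergy c p u u') (u' r * (u'' r + u r ^ p / c)) r :=
    fun c r h₁ h₂ ↦ hasDerivAt_radialEnergy (hu r h₁ h₂) (hu' r h₁ h₂) (hpos r h₁ h₂).ne'
      (by linarith)
  constructor
  · refine strictMonoOn_of_hasDerivAt_pos (convex_Ici_inter_coe_lt τ ρ)
      (fun r ⟨h₁, h₂⟩ ↦ (hE Lam r h₁ h₂).rpow_mul_of_ne_zero (hτ.trans_le h₁).ne' _)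
      fun r ⟨h₁, h₂⟩ ↦ rpow_mul_radialEnergy_deriv_pos (hτ.trans_le h₁) hm hLam (by linarith)
        (hpos r h₁ h₂) (hdec r h₁ h₂) ?_
    rw [hnt, add_sub_cancel_right]
    exact (hPucci r h₁ h₂).add_div_Lam_le hn1 hlam hlL (hτ.trans_le h₁) (hpos r h₁ h₂)
      (hdec r h₁ h₂)
  · exact antitoneOn_of_hasDerivAt_nonpos (convex_Ici_inter_coe_lt τ ρ)
      (fun r ⟨h₁, h₂⟩ ↦ hE lam r h₁ h₂)
      fun r ⟨h₁, h₂⟩ ↦ mul_nonpos_of_nonpos_of_nonneg (hdec r h₁ h₂)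
        ((hPucci r h₁ h₂).le_add_div_lam hn1 hlam (hτ.trans_le h₁) (hpos r h₁ h₂)
          (hdec r h₁ h₂))

/-- Proposition 2.2 (paper): along a positive nonincreasing radial arc satisfying the Pucci
differential inequalities on `[τ, ρ)` (with `ρ ≤ ∞`) and `ñ₋ > 2`, the energy
`E₁(r) = r^{2(ñ₋−1)}(u'(r)²/2 + u(r)^{p+1}/(Λ(p+1)))` is strictly increasing and
`E₂(r) = u'(r)²/2 + u(r)^{p+1}/(λ(p+1))` is nonincreasing. -/
theorem energy_monotonicity
    (n : ℕ) (hn : 2 ≤ n) (lam Lam p ntil : ℝ) (hlam : 0 < lam) (hlL : lam ≤ Lam) (hp : 1 < p)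
    (hnt : ntil = Lam / lam * ((n : ℝ) - 1) + 1) (hnt2 : 2 < ntil)
    (τ : ℝ) (hτ : 0 < τ) (ρ : WithTop ℝ) (hτρ : (τ : WithTop ℝ) < ρ)
    (u u' u'' : ℝ → ℝ)
    (hu : ∀ r : ℝ, τ ≤ r → (r : WithTop ℝ) < ρ → HasDerivAt u (u' r) r)
    (hu' : ∀ r : ℝ, τ ≤ r → (r : WithTop ℝ) < ρ → HasDerivAt u' (u'' r) r)
    (hu'' : ContinuousOn u'' {r : ℝ | τ ≤ r ∧ (r : WithTop ℝ) < ρ})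
    (hpos : ∀ r : ℝ, τ ≤ r → (r : WithTop ℝ) < ρ → 0 < u r)
    (hdec : ∀ r : ℝ, τ ≤ r → (r : WithTop ℝ) < ρ → u' r ≤ 0)
    (hPucci : ∀ r : ℝ, τ ≤ r → (r : WithTop ℝ) < ρ → PucciIneq n lam Lam p u u' u'' r) :
    StrictMonoOn
      (fun r : ℝ => r ^ (2 * (ntil - 1)) * (u' r ^ 2 / 2 + u r ^ (p + 1) / (Lam * (p + 1))))
      {r : ℝ | τ ≤ r ∧ (r : WithTop ℝ) < ρ} ∧
    AntitoneOn (fun r : ℝ => u' r ^ 2 / 2 + u r ^ (p + 1) / (lam * (p + 1)))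
      {r : ℝ | τ ≤ r ∧ (r : WithTop ℝ) < ρ} :=
  energy_monotonicity_general n hn lam Lam p ntil hlam hlL hp hnt τ hτ ρ u u' u'' hu hu' hpos hdec
    hPucci
end

section
/- Assume ñ > 2 and fix a > 0. For every M > 0 there exists A > 0 such that: for every α ≥ A and every rising radial arc (u, a, τ) with slope α, one has u(τ) > M. (This is the uniform version of: u(τ(α), α) → +∞ as α → +∞.) -/
open Real Set

/-- A rising radial arc with slope `α`: `u ∈ C²([a,τ])`, `u(a) = 0`, `u'(a) = α > 0`,
`u > 0` on `(a,τ]`, `u' > 0` on `[a,τ)`, `u'(τ) = 0`, and `u` satisfies the Pucci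
differential inequalities on `(a,τ)`. -/
def RisingArc (n : ℕ) (lam Lam p : ℝ) (u u' u'' : ℝ → ℝ) (a τ α : ℝ) : Prop :=
  0 < a ∧ a < τ ∧ 0 < α ∧
  (∀ r ∈ Set.Icc a τ, HasDerivAt u (u' r) r) ∧
  (∀ r ∈ Set.Icc a τ, HasDerivAt u' (u'' r) r) ∧
  ContinuousOn u'' (Set.Icc a τ) ∧
  u a = 0 ∧ u' a = α ∧
  (∀ r ∈ Set.Ioc a τ, 0 < u r) ∧
  (∀ r ∈ Set.Ico a τ, 0 < u' r) ∧
  u' τ = 0 ∧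
  (∀ r ∈ Set.Ioo a τ, PucciIneq n lam Lam p u u' u'' r)

/-!
If the peak `u(τ)` stayed below `M`, the source term `|u|^{p-1} u` would be at most `M^p` on the
whole arc, and the first Pucci inequality would bound the radial Laplacian `u'' + m u'/r`,
`m = (Λ/λ)(n-1)`, from below by `-M^p/λ`. The flux `r^m u'(r) + K r^{m+1}` (with
`(m+1) K = M^p/λ`) is then nondecreasing, so for `α ≫ K a` the flux `r^m u'(r)` stays above half
its initial value `a^m α` on `[a, 2a]`. Hence `u'` does not vanish before `2a`, `u' ≥ α/2^{m+1}`
on `[a, 2a]`, and `u(τ) ≥ u(2a) ≥ a α/2^{m+1}`, which exceeds `M` once `α` is large.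
-/

/-- The radial Laplacian in the (possibly fractional) dimension `m + 1`; the Pucci operators
reduce to it with `m + 1 = ñ = (Λ/λ)(n-1) + 1`. -/
noncomputable def radialLaplacian (m : ℝ) (u' u'' : ℝ → ℝ) (r : ℝ) : ℝ :=
  u'' r + m * (u' r / r)

theorem monotoneOn_Icc_of_hasDerivAt_nonneg {f f' : ℝ → ℝ} {a b : ℝ}
    (hf : ∀ x ∈ Icc a b, HasDerivAt f (f' x) x) (hf' : ∀ x ∈ Ioo a b, 0 ≤ f' x) :
    MonotoneOn f (Icc a b) :=
  monotoneOn_of_hasDerivWithinAt_nonneg (convex_Icc a b)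
    (fun x hx => (hf x hx).continuousAt.continuousWithinAt)
    (by simpa only [interior_Icc] using
      fun x hx => (hf x (Ioo_subset_Icc_self hx)).hasDerivWithinAt)
    (by simpa only [interior_Icc] using hf')

theorem min_Pp_zero_le_mul_radialLaplacian {n : ℕ} {lam Lam r : ℝ} {u' u'' : ℝ → ℝ}
    (hn : 1 ≤ n) (hlam : 0 < lam) (hLam : 0 ≤ Lam) (hr : 0 < r) (hu' : 0 < u' r) :
    min (Pp n lam Lam u' u'' r) 0 ≤ lam * radialLaplacian (Lam / lam * ((n : ℝ) - 1)) u' u'' r := by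
  have hn' : (0 : ℝ) ≤ (n : ℝ) - 1 := by
    rw [sub_nonneg]; exact_mod_cast hn
  have hv : 0 < u' r / r := div_pos hu' hr
  have hlap : lam * radialLaplacian (Lam / lam * ((n : ℝ) - 1)) u' u'' r
      = lam * u'' r + ((n : ℝ) - 1) * (Lam * (u' r / r)) := by
    unfold radialLaplacian; field_simp
  rw [hlap, Pp, max_eq_left hv.le, min_eq_right hv.le]
  rcases le_total 0 (u'' r) with h | h
  · exact (min_le_right _ _).trans (by positivity)
  · rw [max_eq_right h, min_eq_left h]
    exact (min_le_left _ _).trans_eq (by ring)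

theorem monotoneOn_flux {u' u'' : ℝ → ℝ} {a τ m K : ℝ} (ha : 0 < a)
    (hu' : ∀ r ∈ Icc a τ, HasDerivAt u' (u'' r) r)
    (hlap : ∀ r ∈ Ioo a τ, -((m + 1) * K) ≤ radialLaplacian m u' u'' r) :
    MonotoneOn (fun r => r ^ m * u' r + K * r ^ (m + 1)) (Icc a τ) := by
  refine monotoneOn_Icc_of_hasDerivAt_nonneg
    (f' := fun r => m * r ^ (m - 1) * u' r + r ^ m * u'' r + K * ((m + 1) * r ^ (m + 1 - 1)))
    (fun r hr => ?_) (fun r hr => ?_)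
  · have hr0 : r ≠ 0 := (ha.trans_le hr.1).ne'
    exact ((hasDerivAt_rpow_const (Or.inl hr0)).mul (hu' r hr)).add
      ((hasDerivAt_rpow_const (Or.inl hr0)).const_mul K)
  · have hr0 : 0 < r := ha.trans hr.1
    have hderiv : m * r ^ (m - 1) * u' r + r ^ m * u'' r + K * ((m + 1) * r ^ (m + 1 - 1))
        = r ^ m * (radialLaplacian m u' u'' r + (m + 1) * K) := by
      rw [add_sub_cancel_right, rpow_sub_one hr0.ne', radialLaplacian]
      field_simp
      ring
    rw [hderiv]
    exact mul_nonneg (rpow_nonneg hr0.le m) (by linarith [hlap r hr])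

theorem two_mul_lt_and_le_of_monotoneOn_flux {u' : ℝ → ℝ} {a τ m K : ℝ} (ha : 0 < a)
    (hm : 0 ≤ m) (hK : 0 ≤ K) (haτ : a ≤ τ)
    (hflux : MonotoneOn (fun r => r ^ m * u' r + K * r ^ (m + 1)) (Icc a τ))
    (hτ : u' τ ≤ 0) (hpos : 0 < u' a) (hbig : 2 ^ (m + 2) * K * a ≤ u' a) :
    2 * a < τ ∧ ∀ r ∈ Icc a (2 * a), u' a / 2 ^ (m + 1) ≤ u' r := by
  have ham : 0 < a ^ m := rpow_pos_of_pos ha m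
  have h2a : (2 * a) ^ (m + 1) = 2 ^ (m + 1) * a ^ m * a := by
    rw [mul_rpow zero_le_two ha.le, rpow_add_one ha.ne']; ring
  have h2 : (2 : ℝ) ^ (m + 2) = 2 * 2 ^ (m + 1) := by
    rw [show m + 2 = (m + 1) + 1 by ring, rpow_add_one two_ne_zero]; ring
  have hflux_lower : ∀ r ∈ Icc a τ, r ≤ 2 * a → a ^ m * u' a / 2 ≤ r ^ m * u' r := by
    intro r hr hr2
    have hmono := hflux ⟨le_rfl, haτ⟩ hr hr.1
    have hKr : K * r ^ (m + 1) ≤ K * (2 * a) ^ (m + 1) :=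
      mul_le_mul_of_nonneg_left (rpow_le_rpow (ha.le.trans hr.1) hr2 (by linarith)) hK
    have hKa : 0 ≤ K * a ^ (m + 1) := mul_nonneg hK (rpow_nonneg ha.le _)
    rw [h2a] at hKr
    rw [h2] at hbig
    dsimp only at hmono
    nlinarith
  have hτ2a : 2 * a < τ := by
    by_contra! hle
    have := hflux_lower τ ⟨haτ, le_rfl⟩ hle
    nlinarith [rpow_nonneg (ha.le.trans haτ) m]
  refine ⟨hτ2a, fun r hr => ?_⟩
  have hr0 : 0 < r := ha.trans_le hr.1
  have hlow := hflux_lower r ⟨hr.1, hr.2.trans hτ2a.le⟩ hr.2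
  have hrm : r ^ m ≤ 2 ^ m * a ^ m := by
    rw [← mul_rpow zero_le_two ha.le]; exact rpow_le_rpow hr0.le hr.2 hm
  have hu'r : 0 < u' r := by
    by_contra! h
    nlinarith [mul_nonpos_of_nonneg_of_nonpos (rpow_nonneg hr0.le m) h]
  have h2m : (2 : ℝ) ^ (m + 1) = 2 ^ m * 2 := rpow_add_one two_ne_zero m
  rw [div_le_iff₀' (by positivity), h2m]
  nlinarith [mul_le_mul_of_nonneg_right hrm hu'r.le]

theorem mul_sub_le_sub_of_le_hasDerivAt {u u' : ℝ → ℝ} {a b c : ℝ}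
    (hu : ∀ r ∈ Icc a b, HasDerivAt u (u' r) r) (hc : ∀ r ∈ Ioo a b, c ≤ u' r) (hab : a ≤ b) :
    c * (b - a) ≤ u b - u a := by
  have := monotoneOn_Icc_of_hasDerivAt_nonneg (f := fun r => u r - c * r)
    (fun r hr => (hu r hr).sub ((hasDerivAt_id r).const_mul c))
    (fun r hr => by simpa using hc r hr) ⟨le_rfl, hab⟩ ⟨hab, le_rfl⟩ hab
  dsimp only at this
  linarith

section RisingArc

variable {n : ℕ} {lam Lam p a τ α : ℝ} {u u' u'' : ℝ → ℝ}

theorem RisingArc.monotoneOn (h : RisingArc n lam Lam p u u' u'' a τ α) :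
    MonotoneOn u (Icc a τ) := by
  obtain ⟨-, -, -, hu, -, -, -, -, -, hu'pos, -, -⟩ := h
  exact monotoneOn_Icc_of_hasDerivAt_nonneg hu fun r hr => (hu'pos r ⟨hr.1.le, hr.2⟩).le

theorem RisingArc.neg_div_le_radialLaplacian {M : ℝ} (hn : 1 ≤ n) (hlam : 0 < lam)
    (hLam : 0 ≤ Lam) (hp : 1 ≤ p) (h : RisingArc n lam Lam p u u' u'' a τ α) (hM : u τ ≤ M) :
    ∀ r ∈ Ioo a τ,
      -(M ^ (p - 1) * M / lam) ≤ radialLaplacian (Lam / lam * ((n : ℝ) - 1)) u' u'' r := by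
  intro r hr
  have hurM : u r ≤ M := (h.monotoneOn ⟨hr.1.le, hr.2.le⟩ ⟨h.2.1.le, le_rfl⟩ hr.2.le).trans hM
  obtain ⟨ha, -, -, -, -, -, -, -, hupos, hu'pos, -, hpucci⟩ := h
  have hur : 0 < u r := hupos r ⟨hr.1, hr.2.le⟩
  have hsource : |u r| ^ (p - 1) * u r ≤ M ^ (p - 1) * M := by
    rw [abs_of_pos hur]
    exact mul_le_mul (rpow_le_rpow hur.le hurM (by linarith)) hurM hur.le
      (rpow_nonneg (hur.le.trans hurM) _)
  have hmin := min_Pp_zero_le_mul_radialLaplacian (u'' := u'') hn hlam hLam (ha.trans hr.1)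
    (hu'pos r ⟨hr.1.le, hr.2⟩)
  have hMp : 0 ≤ M ^ (p - 1) * M :=
    mul_nonneg (rpow_nonneg (hur.le.trans hurM) _) (hur.le.trans hurM)
  rw [← neg_div, div_le_iff₀' hlam]
  have := le_min (neg_le_of_neg_le ((hpucci r hr).1.trans hsource)) (neg_nonpos.2 hMp)
  linarith [this.trans hmin]

end RisingArc

theorem rising_arc_peak_tendsto_infty_general
    (n : ℕ) (hn : 2 ≤ n) (lam Lam p : ℝ) (hlam : 0 < lam) (hlL : lam ≤ Lam) (hp : 1 < p)
    (a : ℝ) (ha : 0 < a) (M : ℝ) (hM : 0 < M) :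
    ∃ A : ℝ, 0 < A ∧ ∀ α : ℝ, A ≤ α → ∀ (u u' u'' : ℝ → ℝ) (τ : ℝ),
      RisingArc n lam Lam p u u' u'' a τ α → M < u τ := by
  have hn1 : 1 ≤ n := by omega
  have hLam : 0 ≤ Lam := hlam.le.trans hlL
  set m := Lam / lam * ((n : ℝ) - 1)
  have hm : 0 ≤ m := mul_nonneg (by positivity) (sub_nonneg.2 (by exact_mod_cast hn1))
  set K := M ^ (p - 1) * M / lam / (m + 1)
  have hK : 0 ≤ K := by positivity
  refine ⟨2 ^ (m + 2) * K * a + 2 ^ (m + 1) * M / a + 1, by positivity, ?_⟩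
  intro α hα u u' u'' τ harc
  by_contra! huτ
  have hlap := harc.neg_div_le_radialLaplacian hn1 hlam hLam hp.le huτ
  obtain ⟨-, haτ, hα0, hu, hu', -, hua, hu'a, -, -, hu'τ, -⟩ := id harc
  have hflux := monotoneOn_flux (K := K) ha hu' fun r hr => by
    rw [mul_div_cancel₀ _ (by positivity : m + 1 ≠ 0)]; exact hlap r hr
  have hKa : 0 ≤ 2 ^ (m + 2) * K * a := by positivity
  have hMa : 0 ≤ 2 ^ (m + 1) * M / a := by positivity
  obtain ⟨h2a, hslope⟩ := two_mul_lt_and_le_of_monotoneOn_flux ha hm hK haτ.le hflux hu'τ.le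
    (hu'a ▸ hα0) (by rw [hu'a]; linarith)
  have hrise := mul_sub_le_sub_of_le_hasDerivAt (fun r hr => hu r ⟨hr.1, hr.2.trans h2a.le⟩)
    (fun r hr => hu'a ▸ hslope r (Ioo_subset_Icc_self hr)) (by linarith : a ≤ 2 * a)
  have hpeak := harc.monotoneOn ⟨by linarith, h2a.le⟩ ⟨haτ.le, le_rfl⟩ h2a.le
  have hMα : M < α / 2 ^ (m + 1) * a := by
    rw [div_mul_eq_mul_div, lt_div_iff₀' (by positivity), ← div_lt_iff₀ ha]; linarith
  linarith

/-- Lemma 3.1 (i) (paper), uniform version: `u(τ(α), α) → +∞` as `α → +∞`. -/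
theorem rising_arc_peak_tendsto_infty
    (n : ℕ) (hn : 2 ≤ n) (lam Lam p ntil : ℝ) (hlam : 0 < lam) (hlL : lam ≤ Lam) (hp : 1 < p)
    (hnt : ntil = Lam / lam * ((n : ℝ) - 1) + 1) (hnt2 : 2 < ntil)
    (a : ℝ) (ha : 0 < a) (M : ℝ) (hM : 0 < M) :
    ∃ A : ℝ, 0 < A ∧ ∀ α : ℝ, A ≤ α → ∀ (u u' u'' : ℝ → ℝ) (τ : ℝ),
      RisingArc n lam Lam p u u' u'' a τ α → M < u τ :=
  rising_arc_peak_tendsto_infty_general n hn lam Lam p hlam hlL hp a ha M hM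
end

section
/- Assume ñ > 2 and fix a > 0. For every ε > 0 there exists A > 0 such that: for every α ≥ A and every rising radial arc (u, a, τ) with slope α, one has τ ≤ a + ε. (This is the uniform version of: τ(α) → a as α → +∞.) -/
open Real Set

/-! Fix a small `δ > 0` and set `w = u'(a + δ)`, `v = u(a + δ)`. Since `u'' ≤ -u^p/Λ < 0`, `u` is
concave, so `v ≥ δ w`; the same bound on `[a + δ, a + 2δ]`, where `u ≥ v` and `u' > 0`, gives
`δ v^p < Λ w`. Together, `δ^(p+1) w^(p-1) < Λ`, so `w` is bounded independently of `α` because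
`p > 1`. The lower bound `u'' ≥ -u^p/λ - Q u'/r`, `Q = (n-1)Λ/λ`, keeps `u'` from falling from `α`
to `w` on `[a, a + δ]`: once `2δQ ≤ a`, `α/2 ≤ w + δ v^p/λ < (1 + Λ/λ) w`. So `α` is bounded
whenever `τ > a + 2δ`. -/

theorem image_sub_le_mul_sub_of_hasDerivAt_le {f f' : ℝ → ℝ} {x y C : ℝ} (hxy : x ≤ y)
    (hf : ∀ t ∈ Icc x y, HasDerivAt f (f' t) t) (hC : ∀ t ∈ Ioo x y, f' t ≤ C) :
    f y - f x ≤ C * (y - x) := by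
  refine (convex_Icc x y).image_sub_le_mul_sub_of_deriv_le
    (fun t ht ↦ (hf t ht).continuousAt.continuousWithinAt) (fun t ht ↦ ?_) (fun t ht ↦ ?_)
    x (left_mem_Icc.2 hxy) y (right_mem_Icc.2 hxy) hxy <;> rw [interior_Icc] at ht
  · exact (hf t (Ioo_subset_Icc_self ht)).differentiableAt.differentiableWithinAt
  · rw [(hf t (Ioo_subset_Icc_self ht)).deriv]
    exact hC t ht

theorem mul_sub_le_image_sub_of_le_hasDerivAt {f f' : ℝ → ℝ} {x y C : ℝ} (hxy : x ≤ y)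
    (hf : ∀ t ∈ Icc x y, HasDerivAt f (f' t) t) (hC : ∀ t ∈ Ioo x y, C ≤ f' t) :
    C * (y - x) ≤ f y - f x := by
  have := image_sub_le_mul_sub_of_hasDerivAt_le (f := fun t ↦ -f t) (f' := fun t ↦ -f' t)
    (C := -C) hxy (fun t ht ↦ (hf t ht).neg) (fun t ht ↦ neg_le_neg (hC t ht))
  linarith

theorem lt_rpow_inv_of_mul_le_of_rpow_mul_lt {p δ K v w : ℝ} (hp : 1 < p) (hδ : 0 < δ)
    (hw : 0 < w) (hv : w * δ ≤ v) (hvp : v ^ p * δ < K * w) :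
    w < (K / δ ^ (p + 1)) ^ (p - 1)⁻¹ := by
  have hδp : 0 < δ ^ (p + 1) := by positivity
  have hwδ : (w * δ) ^ p * δ ≤ v ^ p * δ := by gcongr
  have hsplit : (w * δ) ^ p * δ = w ^ (p - 1) * δ ^ (p + 1) * w := by
    rw [Real.mul_rpow hw.le hδ.le, Real.rpow_sub_one hw.ne', Real.rpow_add_one hδ.ne']
    field_simp
  have hK : w ^ (p - 1) * δ ^ (p + 1) < K :=
    lt_of_mul_lt_mul_right (by linarith) hw.le
  have hK0 : 0 < K := lt_of_le_of_lt (by positivity) hK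
  rwa [Real.lt_rpow_inv_iff_of_pos hw.le (by positivity) (by linarith), lt_div_iff₀ hδp]

theorem PucciIneq.second_deriv_bounds {n : ℕ} {lam Lam p : ℝ} {u u' u'' : ℝ → ℝ} {r : ℝ}
    (hn : 1 ≤ n) (hlam : 0 < lam) (hLam : 0 < Lam) (hr : 0 < r) (hu : 0 < u r) (hu' : 0 < u' r)
    (h : PucciIneq n lam Lam p u u' u'' r) :
    u'' r ≤ -(u r ^ p / Lam) ∧
      -(u r ^ p / lam) - ((n : ℝ) - 1) * Lam / lam * (u' r / r) ≤ u'' r := by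
  have hq : 0 < u' r / r := div_pos hu' hr
  have hn1 : (0 : ℝ) ≤ n - 1 := by
    have : (1 : ℝ) ≤ n := by exact_mod_cast hn
    linarith
  have hpow : |u r| ^ (p - 1) * u r = u r ^ p := by
    rw [abs_of_pos hu, Real.rpow_sub_one hu.ne', div_mul_cancel₀ _ hu.ne']
  have hpos : 0 < u r ^ p := by positivity
  have hdrift : 0 ≤ ((n : ℝ) - 1) * (lam * (u' r / r)) := by positivity
  obtain ⟨hPp, hPm⟩ := h
  simp only [Pp, Pm, hpow, max_eq_left hq.le, min_eq_right hq.le] at hPp hPm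
  have hconcave : u'' r < 0 := by
    by_contra! h0
    rw [max_eq_left h0, min_eq_right h0] at hPm
    nlinarith
  rw [max_eq_right hconcave.le, min_eq_left hconcave.le] at hPp hPm
  constructor
  · rw [le_neg, div_le_iff₀ hLam]
    linarith
  · have hsplit : -(u r ^ p / lam) - ((n : ℝ) - 1) * Lam / lam * (u' r / r)
        = (-(u r ^ p) - ((n : ℝ) - 1) * Lam * (u' r / r)) / lam := by ring
    rw [hsplit, div_le_iff₀ hlam]
    linarith

namespace RisingArc

variable {n : ℕ} {lam Lam p : ℝ} {u u' u'' : ℝ → ℝ} {a τ α : ℝ}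

theorem second_deriv_bounds (h : RisingArc n lam Lam p u u' u'' a τ α) (hn : 1 ≤ n)
    (hlam : 0 < lam) (hLam : 0 < Lam) {r : ℝ} (hr : r ∈ Ioo a τ) :
    u'' r ≤ -(u r ^ p / Lam) ∧
      -(u r ^ p / lam) - ((n : ℝ) - 1) * Lam / lam * (u' r / r) ≤ u'' r := by
  obtain ⟨ha, -, -, -, -, -, -, -, hu_pos, hu'_pos, -, hP⟩ := h
  exact (hP r hr).second_deriv_bounds hn hlam hLam (ha.trans hr.1)
    (hu_pos r (Ioo_subset_Ioc_self hr)) (hu'_pos r (Ioo_subset_Ico_self hr))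

theorem monotoneOn_s9 (h : RisingArc n lam Lam p u u' u'' a τ α) : MonotoneOn u (Icc a τ) := by
  obtain ⟨-, -, -, hu, -, -, -, -, -, hu'_pos, -, -⟩ := h
  intro x hx y hy hxy
  have := mul_sub_le_image_sub_of_le_hasDerivAt (C := 0) hxy
    (fun t ht ↦ hu t ⟨hx.1.trans ht.1, ht.2.trans hy.2⟩)
    (fun t ht ↦ (hu'_pos t ⟨hx.1.trans ht.1.le, ht.2.trans_le hy.2⟩).le)
  linarith

theorem antitoneOn_deriv (h : RisingArc n lam Lam p u u' u'' a τ α) (hn : 1 ≤ n)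
    (hlam : 0 < lam) (hLam : 0 < Lam) : AntitoneOn u' (Icc a τ) := by
  have hbound := fun t (ht : t ∈ Ioo a τ) ↦ (h.second_deriv_bounds hn hlam hLam ht).1
  obtain ⟨-, -, -, -, hu', -, -, -, hu_pos, -⟩ := h
  intro x hx y hy hxy
  have := image_sub_le_mul_sub_of_hasDerivAt_le (C := 0) hxy
    (fun t ht ↦ hu' t ⟨hx.1.trans ht.1, ht.2.trans hy.2⟩) fun t ht ↦ by
      have ht' : t ∈ Ioo a τ := ⟨hx.1.trans_lt ht.1, ht.2.trans_le hy.2⟩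
      have : 0 < u t ^ p / Lam := by have := hu_pos t (Ioo_subset_Ioc_self ht'); positivity
      linarith [hbound t ht']
  linarith

theorem deriv_mul_sub_le (h : RisingArc n lam Lam p u u' u'' a τ α) (hn : 1 ≤ n)
    (hlam : 0 < lam) (hLam : 0 < Lam) {m : ℝ} (hm : m ∈ Icc a τ) :
    u' m * (m - a) ≤ u m := by
  have hanti := h.antitoneOn_deriv hn hlam hLam
  obtain ⟨-, -, -, hu, -, -, hua, -⟩ := h
  have := mul_sub_le_image_sub_of_le_hasDerivAt hm.1
    (fun t ht ↦ hu t ⟨ht.1, ht.2.trans hm.2⟩)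
    (fun t ht ↦ hanti ⟨ht.1.le, ht.2.le.trans hm.2⟩ hm ht.2.le)
  rwa [hua, sub_zero] at this

theorem rpow_mul_sub_lt_deriv (h : RisingArc n lam Lam p u u' u'' a τ α) (hn : 1 ≤ n)
    (hlam : 0 < lam) (hLam : 0 < Lam) (hp : 0 ≤ p) {m b : ℝ} (ham : a < m) (hmb : m ≤ b)
    (hbτ : b < τ) : u m ^ p * (b - m) < Lam * u' m := by
  have hmono := h.monotoneOn_s9
  have hbound := fun t (ht : t ∈ Ioo a τ) ↦ (h.second_deriv_bounds hn hlam hLam ht).1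
  obtain ⟨-, -, -, -, hu', -, -, -, hu_pos, hu'_pos, -⟩ := h
  have hum : 0 < u m := hu_pos m ⟨ham, hmb.trans hbτ.le⟩
  have hdrop := image_sub_le_mul_sub_of_hasDerivAt_le (C := -(u m ^ p / Lam)) hmb
    (fun t ht ↦ hu' t ⟨ham.le.trans ht.1, ht.2.trans hbτ.le⟩) fun t ht ↦ by
      have hut : u m ≤ u t := hmono ⟨ham.le, hmb.trans hbτ.le⟩
        ⟨ham.le.trans ht.1.le, ht.2.le.trans hbτ.le⟩ ht.1.le
      have : u m ^ p / Lam ≤ u t ^ p / Lam := by gcongr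
      linarith [hbound t ⟨ham.trans ht.1, ht.2.trans hbτ⟩]
  have hu'b : 0 < u' b := hu'_pos b ⟨ham.le.trans hmb, hbτ⟩
  have : u m ^ p / Lam * (b - m) < u' m := by linarith
  rwa [div_mul_eq_mul_div, div_lt_iff₀ hLam, mul_comm (u' m)] at this

theorem slope_sub_le_deriv (h : RisingArc n lam Lam p u u' u'' a τ α) (hn : 1 ≤ n)
    (hlam : 0 < lam) (hLam : 0 < Lam) (hp : 0 ≤ p) {m : ℝ} (ham : a < m) (hmτ : m < τ) :
    α - (m - a) * (u m ^ p / lam + ((n : ℝ) - 1) * Lam / lam * α / a) ≤ u' m := by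
  have hmono := h.monotoneOn_s9
  have hanti := h.antitoneOn_deriv hn hlam hLam
  have hbound := fun t (ht : t ∈ Ioo a τ) ↦ (h.second_deriv_bounds hn hlam hLam ht).2
  obtain ⟨ha, haτ, -, -, hu', -, -, hu'a, hu_pos, hu'_pos, -⟩ := h
  have hQ : 0 ≤ ((n : ℝ) - 1) * Lam / lam := by
    have : (1 : ℝ) ≤ n := by exact_mod_cast hn
    have : (0 : ℝ) ≤ n - 1 := by linarith
    positivity
  have hslope := mul_sub_le_image_sub_of_le_hasDerivAt
    (C := -(u m ^ p / lam + ((n : ℝ) - 1) * Lam / lam * α / a)) ham.le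
    (fun t ht ↦ hu' t ⟨ht.1, ht.2.trans hmτ.le⟩) fun t ht ↦ by
      have ht' : t ∈ Ioo a τ := ⟨ht.1, ht.2.trans hmτ⟩
      have hut : u t ^ p / lam ≤ u m ^ p / lam := by
        have := hu_pos t (Ioo_subset_Ioc_self ht')
        have := hmono (Ioo_subset_Icc_self ht') ⟨ham.le, hmτ.le⟩ ht.2.le
        gcongr
      have hu't : u' t / t ≤ α / a := by
        have hu't_le : u' t ≤ α :=
          hu'a ▸ hanti (left_mem_Icc.2 haτ.le) (Ioo_subset_Icc_self ht') ht.1.le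
        exact div_le_div₀ (hu'a ▸ (hu'_pos a (left_mem_Ico.2 haτ)).le) hu't_le ha ht.1.le
      have hdrift :
          ((n : ℝ) - 1) * Lam / lam * (u' t / t) ≤ ((n : ℝ) - 1) * Lam / lam * α / a := by
        rw [mul_div_assoc _ α]
        exact mul_le_mul_of_nonneg_left hu't hQ
      linarith [hbound t ht']
  linarith

theorem slope_lt (h : RisingArc n lam Lam p u u' u'' a τ α) (hn : 1 ≤ n) (hlam : 0 < lam)
    (hLam : 0 < Lam) (hp : 1 < p) {δ : ℝ} (hδ : 0 < δ)
    (hδQ : 2 * δ * (((n : ℝ) - 1) * Lam / lam) ≤ a) (hτ : a + 2 * δ < τ) :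
    α < 2 * (1 + Lam / lam) * (Lam / δ ^ (p + 1)) ^ (p - 1)⁻¹ := by
  have hm : a + δ ∈ Icc a τ := ⟨by linarith, by linarith⟩
  have hconcave := h.deriv_mul_sub_le hn hlam hLam hm
  have hdrop := h.rpow_mul_sub_lt_deriv hn hlam hLam (by linarith) (m := a + δ) (b := a + 2 * δ)
    (by linarith) (by linarith) hτ
  have hslope := h.slope_sub_le_deriv hn hlam hLam (by linarith) (m := a + δ) (by linarith)
    (by linarith)
  obtain ⟨ha, -, hα, -, -, -, -, -, -, hu'_pos, -⟩ := h
  set w := u' (a + δ)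
  set v := u (a + δ)
  rw [add_sub_cancel_left] at hconcave hslope
  rw [show a + 2 * δ - (a + δ) = δ by ring] at hdrop
  have hw : 0 < w := hu'_pos _ ⟨hm.1, by linarith⟩
  have hdrift : δ * (((n : ℝ) - 1) * Lam / lam * α / a) ≤ α / 2 := by
    rw [show δ * (((n : ℝ) - 1) * Lam / lam * α / a)
      = 2 * δ * (((n : ℝ) - 1) * Lam / lam) * α / (2 * a) by ring,
      div_le_div_iff₀ (by positivity) two_pos]
    linarith [mul_le_mul_of_nonneg_right hδQ hα.le]
  have hsource : δ * (v ^ p / lam) < Lam / lam * w := by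
    rw [mul_div_assoc', div_mul_eq_mul_div, div_lt_div_iff_of_pos_right hlam]
    linarith
  calc α < 2 * (1 + Lam / lam) * w := by linarith
    _ < 2 * (1 + Lam / lam) * (Lam / δ ^ (p + 1)) ^ (p - 1)⁻¹ := by
      gcongr
      exact lt_rpow_inv_of_mul_le_of_rpow_mul_lt hp hδ hw hconcave hdrop

end RisingArc

theorem rising_arc_peak_location_tendsto_a_general
    (n : ℕ) (hn : 2 ≤ n) (lam Lam p : ℝ) (hlam : 0 < lam) (hlL : lam ≤ Lam) (hp : 1 < p)
    (a : ℝ) (ha : 0 < a) (ε : ℝ) (hε : 0 < ε) :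
    ∃ A : ℝ, 0 < A ∧ ∀ α : ℝ, A ≤ α → ∀ (u u' u'' : ℝ → ℝ) (τ : ℝ),
      RisingArc n lam Lam p u u' u'' a τ α → τ ≤ a + ε := by
  have hLam : 0 < Lam := hlam.trans_le hlL
  set Q := ((n : ℝ) - 1) * Lam / lam
  have hQ : 0 < Q := by
    have : (2 : ℝ) ≤ n := by exact_mod_cast hn
    have : (0 : ℝ) < n - 1 := by linarith
    positivity
  obtain ⟨δ, hδ, hδε, hδQ⟩ : ∃ δ > 0, 2 * δ ≤ ε ∧ 2 * δ * Q ≤ a := by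
    refine ⟨min (ε / 2) (a / (2 * Q)), by positivity,
      by linarith [min_le_left (ε / 2) (a / (2 * Q))], ?_⟩
    calc 2 * min (ε / 2) (a / (2 * Q)) * Q ≤ 2 * (a / (2 * Q)) * Q := by
          gcongr
          exact min_le_right _ _
      _ = a := by field_simp
  refine ⟨2 * (1 + Lam / lam) * (Lam / δ ^ (p + 1)) ^ (p - 1)⁻¹, by positivity,
    fun α hα u u' u'' τ h ↦ ?_⟩
  by_contra! hτ
  exact (h.slope_lt (by omega) hlam hLam hp hδ hδQ (by linarith)).not_ge hα

/-- Lemma 3.1 (ii) (paper), uniform version: `τ(α) → a` as `α → +∞`. -/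
theorem rising_arc_peak_location_tendsto_a
    (n : ℕ) (hn : 2 ≤ n) (lam Lam p ntil : ℝ) (hlam : 0 < lam) (hlL : lam ≤ Lam) (hp : 1 < p)
    (hnt : ntil = Lam / lam * ((n : ℝ) - 1) + 1) (hnt2 : 2 < ntil)
    (a : ℝ) (ha : 0 < a) (ε : ℝ) (hε : 0 < ε) :
    ∃ A : ℝ, 0 < A ∧ ∀ α : ℝ, A ≤ α → ∀ (u u' u'' : ℝ → ℝ) (τ : ℝ),
      RisingArc n lam Lam p u u' u'' a τ α → τ ≤ a + ε :=
  rising_arc_peak_location_tendsto_a_general n hn lam Lam p hlam hlL hp a ha ε hε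
end

section
/- For every rising radial arc (u, a, τ) with slope α > 0, one has the upper bound u(τ)^{p+1} ≤ (Λ(p+1)/2)·α². (In particular u(τ(α), α) → 0 as α → 0⁺.) -/
open Real Set

/-- Estimate (2.10) in the paper: `u(τ)^{p+1} ≤ (Λ(p+1)/2) α²` for any rising radial arc. -/
theorem rising_arc_peak_upper_bound
    (n : ℕ) (hn : 2 ≤ n) (lam Lam p : ℝ) (hlam : 0 < lam) (hlL : lam ≤ Lam) (hp : 1 < p)
    (a τ α : ℝ) (u u' u'' : ℝ → ℝ)
    (harc : RisingArc n lam Lam p u u' u'' a τ α) :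
    u τ ^ (p + 1) ≤ Lam * (p + 1) / 2 * α ^ 2 := by
  obtain ⟨ha, haτ, hα, hu, hu', hu''c, hua, hu'a, hupos, hu'pos, hu'τ, hP⟩ := harc
  have hp1 : (0:ℝ) < p + 1 := by linarith
  have hLam : 0 < Lam := lt_of_lt_of_le hlam hlL
  set F : ℝ → ℝ := fun r => u r ^ (p + 1) / (p + 1) + Lam * (u' r) ^ 2 / 2 with hF
  -- continuity of u and u' on Icc
  have hcu : ContinuousOn u (Icc a τ) := fun r hr =>
    (hu r hr).continuousAt.continuousWithinAt
  have hcu' : ContinuousOn u' (Icc a τ) := fun r hr =>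
    (hu' r hr).continuousAt.continuousWithinAt
  have hcF : ContinuousOn F (Icc a τ) := by
    apply ContinuousOn.add
    · exact (hcu.rpow_const (fun r _ => Or.inr (by linarith))).div_const _
    · exact ((continuousOn_const.mul ((hcu'.pow 2)))).div_const _
  -- derivative of F on the interior
  have hderiv : ∀ r ∈ Ioo a τ, HasDerivAt F
      (u' r * (p + 1) * u r ^ (p + 1 - 1) / (p + 1) +
        Lam * ((2:ℕ) * u' r ^ (2 - 1) * u'' r) / 2) r := by
    intro r hr
    have hrI : r ∈ Icc a τ := ⟨hr.1.le, hr.2.le⟩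
    have hur : 0 < u r := hupos r ⟨hr.1, hr.2.le⟩
    exact (((hu r hrI).rpow_const (Or.inl hur.ne')).div_const (p + 1)).add
      ((((hu' r hrI).pow 2).const_mul Lam).div_const 2)
  -- the derivative is nonpositive
  have hnonpos : ∀ r ∈ Ioo a τ,
      u' r * (p + 1) * u r ^ (p + 1 - 1) / (p + 1) +
        Lam * ((2:ℕ) * u' r ^ (2 - 1) * u'' r) / 2 ≤ 0 := by
    intro r hr
    have hr0 : 0 < r := lt_trans ha hr.1
    have hur : 0 < u r := hupos r ⟨hr.1, hr.2.le⟩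
    have hu'r : 0 < u' r := hu'pos r ⟨hr.1.le, hr.2⟩
    have hdivpos : 0 < u' r / r := div_pos hu'r hr0
    have hn1 : (1:ℝ) ≤ (n:ℝ) := by exact_mod_cast Nat.one_le_of_lt hn
    have key := (hP r hr).2
    have habs : |u r| = u r := abs_of_pos hur
    have hpow : |u r| ^ (p - 1) * u r = u r ^ p := by
      rw [habs, ← Real.rpow_add_one hur.ne' (p - 1)]
      ring_nf
    rw [hpow] at key
    have hmax : max (u' r / r) 0 = u' r / r := max_eq_left hdivpos.le
    have hmin : min (u' r / r) 0 = 0 := min_eq_right hdivpos.le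
    have hradial : 0 ≤ ((n:ℝ) - 1) * (lam * (u' r / r) + Lam * 0) := by
      have : 0 ≤ lam * (u' r / r) := le_of_lt (mul_pos hlam hdivpos)
      nlinarith
    have hupp : 0 < u r ^ p := Real.rpow_pos_of_pos hur p
    -- show u'' r < 0
    have hu''neg : u'' r < 0 := by
      by_contra h
      push_neg at h
      have hmax2 : max (u'' r) 0 = u'' r := max_eq_left h
      have hmin2 : min (u'' r) 0 = 0 := min_eq_right h
      rw [Pm, hmax2, hmin2, hmax, hmin] at key
      nlinarith
    have hmax2 : max (u'' r) 0 = 0 := max_eq_right hu''neg.le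
    have hmin2 : min (u'' r) 0 = u'' r := min_eq_left hu''neg.le
    rw [Pm, hmax2, hmin2, hmax, hmin] at key
    -- key : u r ^ p ≤ -(lam*0 + Lam*u'' r + (n-1)*(lam*(u'/r)+Lam*0))
    have hbound : u r ^ p ≤ -(Lam * u'' r) := by nlinarith
    have h1 : u' r * (p + 1) * u r ^ (p + 1 - 1) / (p + 1) = u r ^ p * u' r := by
      field_simp
      ring_nf
    have h2 : Lam * ((2:ℕ) * u' r ^ (2 - 1) * u'' r) / 2 = Lam * u'' r * u' r := by
      push_cast
      ring
    rw [h1, h2]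
    nlinarith
  -- F is antitone on [a, τ]
  have hanti : AntitoneOn F (Icc a τ) := by
    apply antitoneOn_of_deriv_nonpos (convex_Icc a τ) hcF
    · intro r hr
      rw [interior_Icc] at hr
      exact (hderiv r hr).differentiableAt.differentiableWithinAt
    · intro r hr
      rw [interior_Icc] at hr
      rw [(hderiv r hr).deriv]
      exact hnonpos r hr
  have hFle : F τ ≤ F a :=
    hanti (left_mem_Icc.mpr haτ.le) (right_mem_Icc.mpr haτ.le) haτ.le
  have hFa : F a = Lam * α ^ 2 / 2 := by
    simp [hF, hua, hu'a, Real.zero_rpow hp1.ne']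
  have hFτ : F τ = u τ ^ (p + 1) / (p + 1) := by
    simp [hF, hu'τ]
  rw [hFa, hFτ] at hFle
  rw [div_le_iff₀ hp1] at hFle
  calc u τ ^ (p + 1) ≤ Lam * α ^ 2 / 2 * (p + 1) := hFle
    _ = Lam * (p + 1) / 2 * α ^ 2 := by ring
end

section
/- For every rising radial arc (u, a, τ) with slope α > 0, one has the lower bound u(τ)^{p+1} ≥ (λ(p+1)/2)·(a/τ)^{2(ñ−1)}·α². -/
open Real Set

set_option maxHeartbeats 1000000 in
/-- Estimate (2.7) in the paper:
`u(τ)^{p+1} ≥ (λ(p+1)/2)(a/τ)^{2(ñ₋−1)} α²` for any rising radial arc. -/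
theorem rising_arc_peak_lower_bound
    (n : ℕ) (hn : 2 ≤ n) (lam Lam p ntil : ℝ) (hlam : 0 < lam) (hlL : lam ≤ Lam) (hp : 1 < p)
    (hnt : ntil = Lam / lam * ((n : ℝ) - 1) + 1)
    (a τ α : ℝ) (u u' u'' : ℝ → ℝ)
    (harc : RisingArc n lam Lam p u u' u'' a τ α) :
    lam * (p + 1) / 2 * (a / τ) ^ (2 * (ntil - 1)) * α ^ 2 ≤ u τ ^ (p + 1) := by
  obtain ⟨ha, haτ, hα, hu, hu', hu''c, hua, hu'a, hupos, hu'pos, hu'τ, hPucci⟩ := harc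
  set k : ℝ := 2 * (ntil - 1) with hkdef
  have hτ : 0 < τ := ha.trans haτ
  have hn2 : (2:ℝ) ≤ (n:ℝ) := by exact_mod_cast hn
  have hn1 : (1:ℝ) ≤ (n:ℝ) - 1 := by linarith
  have hLam : 0 < Lam := lt_of_lt_of_le hlam hlL
  have hk : k = 2 * (Lam / lam) * ((n:ℝ) - 1) := by rw [hkdef, hnt]; ring
  have hkpos : 0 < k := by
    rw [hk]
    have : (1:ℝ) ≤ Lam / lam := (one_le_div hlam).2 hlL
    nlinarith
  have e1 : k * (lam / 2) = ((n:ℝ) - 1) * Lam := by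
    rw [hk]; field_simp
  have hp1 : (0:ℝ) < p + 1 := by linarith
  -- the energy and weighted energy
  set E : ℝ → ℝ := fun r => lam / 2 * u' r ^ 2 + u r ^ (p + 1) / (p + 1) with hEdef
  set F : ℝ → ℝ := fun r => r ^ k * E r with hFdef
  set F' : ℝ → ℝ := fun r =>
    k * r ^ (k - 1) * E r +
      r ^ k * (lam / 2 * (2 * u' r * u'' r) + u' r * (p + 1) * u r ^ (p + 1 - 1) / (p + 1))
    with hF'def
  have hFderiv : ∀ r ∈ Set.Ioo a τ, HasDerivAt F (F' r) r := by
    intro r hr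
    have hr0 : 0 < r := ha.trans hr.1
    have hur : 0 < u r := hupos r ⟨hr.1, hr.2.le⟩
    have hrIcc : r ∈ Set.Icc a τ := ⟨hr.1.le, hr.2.le⟩
    have h1 : HasDerivAt (fun s : ℝ => s ^ k) (k * r ^ (k - 1)) r :=
      Real.hasDerivAt_rpow_const (Or.inl hr0.ne')
    have h2 : HasDerivAt (fun s => lam / 2 * u' s ^ 2) (lam / 2 * (2 * u' r * u'' r)) r := by
      have := ((hu' r hrIcc).pow 2).const_mul (lam / 2)
      simpa [mul_comm, mul_assoc, mul_left_comm] using this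
    have h3 : HasDerivAt (fun s => u s ^ (p + 1) / (p + 1))
        (u' r * (p + 1) * u r ^ (p + 1 - 1) / (p + 1)) r := by
      exact ((hu r hrIcc).rpow_const (Or.inl hur.ne')).div_const (p + 1)
    exact (h1.mul (h2.add h3))
  have hF'nonneg : ∀ r ∈ Set.Ioo a τ, 0 ≤ F' r := by
    intro r hr
    have hr0 : 0 < r := ha.trans hr.1
    have hur : 0 < u r := hupos r ⟨hr.1, hr.2.le⟩
    have hu'r : 0 < u' r := hu'pos r ⟨hr.1.le, hr.2⟩
    have hq : 0 < u' r / r := div_pos hu'r hr0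
    obtain ⟨hP1, hP2⟩ := hPucci r hr
    have habs : |u r| ^ (p - 1) * u r = u r ^ p := by
      rw [abs_of_pos hur]
      rw [show u r ^ (p - 1) * u r = u r ^ (p - 1 + 1) from by
        rw [Real.rpow_add hur, Real.rpow_one]]
      norm_num
    rw [habs] at hP1 hP2
    have hmax : max (u' r / r) 0 = u' r / r := max_eq_left hq.le
    have hmin : min (u' r / r) 0 = 0 := min_eq_right hq.le
    have huppos : 0 < u r ^ p := Real.rpow_pos_of_pos hur p
    -- u'' r < 0
    have hu''neg : u'' r < 0 := by
      by_contra h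
      push_neg at h
      have hmax2 : max (u'' r) 0 = u'' r := max_eq_left h
      have hmin2 : min (u'' r) 0 = 0 := min_eq_right h
      rw [Pm, hmax, hmin, hmax2, hmin2] at hP2
      nlinarith [mul_nonneg hlam.le h, mul_pos (mul_pos hlam hq) (by linarith : (0:ℝ) < (n:ℝ) - 1)]
    have hmax2 : max (u'' r) 0 = 0 := max_eq_right hu''neg.le
    have hmin2 : min (u'' r) 0 = u'' r := min_eq_left hu''neg.le
    rw [Pp, hmax, hmin, hmax2, hmin2] at hP1
    -- key differential inequality
    have h1 : -(((n:ℝ) - 1) * Lam * (u' r / r)) ≤ lam * u'' r + u r ^ p := by linarith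
    have h2 : -(((n:ℝ) - 1) * Lam * u' r) ≤ r * (lam * u'' r + u r ^ p) := by
      have := mul_le_mul_of_nonneg_left h1 hr0.le
      calc -(((n:ℝ) - 1) * Lam * u' r) = r * (-(((n:ℝ) - 1) * Lam * (u' r / r))) := by
            field_simp
        _ ≤ _ := this
    have h3 : -(((n:ℝ) - 1) * Lam * u' r) * u' r ≤ r * (lam * u'' r + u r ^ p) * u' r :=
      mul_le_mul_of_nonneg_right h2 hu'r.le
    have hE2 : 0 ≤ u r ^ (p + 1) / (p + 1) :=
      div_nonneg (Real.rpow_nonneg hur.le _) hp1.le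
    have e1' : k * (lam / 2) * u' r ^ 2 = ((n:ℝ) - 1) * Lam * u' r ^ 2 := by rw [e1]
    have hinner : 0 ≤ k * E r + r * (lam * u' r * u'' r + u r ^ p * u' r) := by
      simp only [hEdef]
      linarith [mul_nonneg hkpos.le hE2, h3, e1']
    have hrk : r ^ k = r ^ (k - 1) * r := by
      rw [← Real.rpow_add_one hr0.ne' (k - 1)]; ring_nf
    have hsimp : F' r = r ^ (k - 1) * (k * E r + r * (lam * u' r * u'' r + u r ^ p * u' r)) := by
      simp only [hF'def, hrk]
      have h4 : u r ^ (p + 1 - 1) = u r ^ p := by norm_num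
      have h5 : u' r * (p + 1) * u r ^ p / (p + 1) = u' r * u r ^ p := by
        field_simp
      rw [h4, h5]
      ring
    rw [hsimp]
    exact mul_nonneg (Real.rpow_nonneg hr0.le _) hinner
  -- monotonicity of F on [a, τ]
  have hFc : ContinuousOn F (Set.Icc a τ) := by
    apply ContinuousOn.mul
    · exact (continuousOn_id.rpow_const fun x hx => Or.inl (ha.trans_le hx.1).ne')
    · apply ContinuousOn.add
      · exact continuousOn_const.mul
          ((ContinuousOn.pow (fun r hr => (hu' r hr).continuousAt.continuousWithinAt) 2))
      · exact ((ContinuousOn.rpow_const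
          (fun r hr => (hu r hr).continuousAt.continuousWithinAt)
          (fun x hx => Or.inr hp1.le))).div_const (p + 1)
  have hmono : MonotoneOn F (Set.Icc a τ) := by
    apply monotoneOn_of_deriv_nonneg (convex_Icc a τ) hFc
    · intro x hx
      rw [interior_Icc] at hx
      exact (hFderiv x hx).differentiableAt.differentiableWithinAt
    · intro x hx
      rw [interior_Icc] at hx
      rw [(hFderiv x hx).deriv]
      exact hF'nonneg x hx
  have hFaτ : F a ≤ F τ :=
    hmono ⟨le_refl a, haτ.le⟩ ⟨haτ.le, le_refl τ⟩ haτ.le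
  have hFa : F a = a ^ k * (lam / 2 * α ^ 2) := by
    rw [hFdef, hEdef]
    simp only [hua, hu'a, Real.zero_rpow hp1.ne', zero_div, add_zero]
  have hFτ : F τ = τ ^ k * (u τ ^ (p + 1) / (p + 1)) := by
    rw [hFdef, hEdef]
    simp only [hu'τ]
    norm_num
  rw [hFa, hFτ] at hFaτ
  have hτk : 0 < τ ^ k := Real.rpow_pos_of_pos hτ k
  rw [Real.div_rpow ha.le hτ.le]
  rw [show lam * (p + 1) / 2 * (a ^ k / τ ^ k) * α ^ 2
      = a ^ k * (lam / 2 * α ^ 2) * (p + 1) / τ ^ k from by ring, div_le_iff₀ hτk]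
  calc a ^ k * (lam / 2 * α ^ 2) * (p + 1) ≤ τ ^ k * (u τ ^ (p + 1) / (p + 1)) * (p + 1) :=
        mul_le_mul_of_nonneg_right hFaτ hp1.le
    _ = u τ ^ (p + 1) * τ ^ k := by field_simp
end

section
/- Assume ñ > 2. For every rising radial arc (u, a, τ) with slope α > 0, one has u(τ) ≥ (a^{ñ−1}·α/(ñ−2))·(a^{2−ñ} − τ^{2−ñ}) − u(τ)^p·(τ−a)²/(2λ). -/
open Real Set

theorem sub_le_sub_of_hasDerivAt_le {f g f' g' : ℝ → ℝ} {a b : ℝ} (hab : a ≤ b)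
    (hf : ∀ x ∈ Icc a b, HasDerivAt f (f' x) x) (hg : ∀ x ∈ Icc a b, HasDerivAt g (g' x) x)
    (hle : ∀ x ∈ Ioo a b, f' x ≤ g' x) : f b - f a ≤ g b - g a := by
  have hmono : MonotoneOn (g - f) (Icc a b) :=
    monotoneOn_Icc_of_hasDerivAt_nonneg (fun x hx ↦ (hg x hx).sub (hf x hx))
      (fun x hx ↦ sub_nonneg.2 (hle x hx))
  have := hmono (left_mem_Icc.2 hab) (right_mem_Icc.2 hab) hab
  simp only [Pi.sub_apply] at this
  linarith

theorem PucciIneq.neg_rpow_div_le {n : ℕ} {lam Lam p : ℝ} {u u' u'' : ℝ → ℝ} {r : ℝ}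
    (h : PucciIneq n lam Lam p u u' u'' r) (hlam : 0 < lam) (hk : 0 ≤ Lam / lam * ((n : ℝ) - 1))
    (hr : 0 < r) (hu : 0 < u r) (hu' : 0 ≤ u' r) :
    -(u r ^ p / lam) ≤ u'' r + Lam / lam * ((n : ℝ) - 1) * (u' r / r) := by
  have hq : 0 ≤ u' r / r := div_nonneg hu' hr.le
  have hpow : |u r| ^ (p - 1) * u r = u r ^ p := by
    rw [abs_of_pos hu, ← rpow_add_one hu.ne', sub_add_cancel]
  have hrhs : lam * (u'' r + Lam / lam * ((n : ℝ) - 1) * (u' r / r)) =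
      lam * u'' r + ((n : ℝ) - 1) * (Lam * (u' r / r)) := by
    field_simp
  rw [← neg_div, div_le_iff₀' hlam]
  rcases lt_or_ge (u'' r) 0 with hconcave | hconvex
  · have hPp : Pp n lam Lam u' u'' r = lam * u'' r + ((n : ℝ) - 1) * (Lam * (u' r / r)) := by
      rw [Pp, max_eq_right hconcave.le, min_eq_left hconcave.le, max_eq_left hq, min_eq_right hq]
      ring
    have := h.1
    rw [hPp, hpow] at this
    linarith
  · calc -(u r ^ p) ≤ 0 := neg_nonpos.2 (rpow_pos_of_pos hu p).le
      _ ≤ _ := mul_nonneg hlam.le (add_nonneg hconvex (mul_nonneg hk hq))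

theorem le_of_neg_le_deriv_add_mul_div {v v' : ℝ → ℝ} {a b k c : ℝ} (ha : 0 < a) (hab : a ≤ b)
    (hk : 0 ≤ k) (hc : 0 ≤ c) (hv : ∀ s ∈ Icc a b, HasDerivAt v (v' s) s)
    (hineq : ∀ s ∈ Ioo a b, -c ≤ v' s + k * (v s / s)) :
    a ^ k * v a * b ^ (-k) - c * (b - a) ≤ v b := by
  have hb : 0 < b := ha.trans_le hab
  have hweighted : ∀ s ∈ Icc a b,
      HasDerivAt (fun s ↦ s ^ k * v s) (k * s ^ (k - 1) * v s + s ^ k * v' s) s := fun s hs ↦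
    (hasDerivAt_rpow_const (Or.inl (ha.trans_le hs.1).ne')).mul (hv s hs)
  have hle : ∀ s ∈ Ioo a b, -(c * b ^ k) ≤ k * s ^ (k - 1) * v s + s ^ k * v' s := by
    intro s hs
    have hs0 : 0 < s := ha.trans hs.1
    have hsk : s ^ k ≤ b ^ k := rpow_le_rpow hs0.le hs.2.le hk
    have hsplit : k * s ^ (k - 1) * v s + s ^ k * v' s = s ^ k * (v' s + k * (v s / s)) := by
      rw [rpow_sub_one hs0.ne']
      field_simp
      ring
    rw [hsplit]
    nlinarith [hineq s hs, rpow_pos_of_pos hs0 k]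
  have := sub_le_sub_of_hasDerivAt_le hab (fun s _ ↦ hasDerivAt_mul_const (-(c * b ^ k)))
    hweighted hle
  have hbk : 0 < b ^ k := rpow_pos_of_pos hb k
  rw [rpow_neg hb.le, ← div_eq_mul_inv, sub_le_iff_le_add, div_le_iff₀ hbk]
  nlinarith

theorem div_mul_rpow_sub_le_sub {u u' : ℝ → ℝ} {a b k A c : ℝ} (ha : 0 < a) (hab : a ≤ b)
    (hk : k ≠ 1) (hu : ∀ r ∈ Icc a b, HasDerivAt u (u' r) r)
    (hslope : ∀ r ∈ Ioo a b, A * r ^ (-k) - c * (r - a) ≤ u' r) :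
    A / (k - 1) * (a ^ (1 - k) - b ^ (1 - k)) - c / 2 * (b - a) ^ 2 ≤ u b - u a := by
  have hk1 : k - 1 ≠ 0 := sub_ne_zero.2 hk
  have hprimitive : ∀ r ∈ Icc a b, HasDerivAt
      (fun r ↦ -(A / (k - 1)) * r ^ (1 - k) - c / 2 * (r - a) ^ 2)
      (-(A / (k - 1)) * ((1 - k) * r ^ (1 - k - 1)) - c / 2 * (↑2 * (r - a) ^ (2 - 1) * 1)) r :=
    fun r hr ↦ ((hasDerivAt_rpow_const (Or.inl (ha.trans_le hr.1).ne')).const_mul _).sub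
      ((((hasDerivAt_id r).sub_const a).pow 2).const_mul _)
  have := sub_le_sub_of_hasDerivAt_le hab hprimitive hu fun r hr ↦ by
    rw [show (1 : ℝ) - k - 1 = -k by ring]
    convert hslope r hr using 1
    field_simp
    ring
  linarith

theorem rising_arc_peak_second_lower_bound_general
    (n : ℕ) (lam Lam p ntil : ℝ) (hlam : 0 < lam) (hp : 1 < p)
    (hnt : ntil = Lam / lam * ((n : ℝ) - 1) + 1) (hnt2 : 2 < ntil)
    (a τ α : ℝ) (u u' u'' : ℝ → ℝ)
    (harc : RisingArc n lam Lam p u u' u'' a τ α) :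
    a ^ (ntil - 1) * α / (ntil - 2) * (a ^ (2 - ntil) - τ ^ (2 - ntil)) -
        u τ ^ p * (τ - a) ^ 2 / (2 * lam) ≤ u τ := by
  obtain ⟨ha, haτ, -, hu, hu', -, hua, hu'a, hupos, hu'pos, -, hpucci⟩ := harc
  have hk : ntil - 1 = Lam / lam * ((n : ℝ) - 1) := by rw [hnt]; ring
  have hmono : MonotoneOn u (Icc a τ) :=
    monotoneOn_Icc_of_hasDerivAt_nonneg hu fun r hr ↦ (hu'pos r (Ioo_subset_Ico_self hr)).le
  have hradial : ∀ r ∈ Ioo a τ, -(u τ ^ p / lam) ≤ u'' r + (ntil - 1) * (u' r / r) := by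
    intro r hr
    have hur := hupos r (Ioo_subset_Ioc_self hr)
    have hpeak : u r ^ p ≤ u τ ^ p := rpow_le_rpow hur.le
      (hmono (Ioo_subset_Icc_self hr) (right_mem_Icc.2 haτ.le) hr.2.le) (by linarith)
    rw [hk]
    refine le_trans ?_ ((hpucci r hr).neg_rpow_div_le hlam (by linarith) (ha.trans hr.1) hur
      (hu'pos r (Ioo_subset_Ico_self hr)).le)
    gcongr
  have hslope : ∀ r ∈ Ioo a τ,
      a ^ (ntil - 1) * α * r ^ (-(ntil - 1)) - u τ ^ p / lam * (r - a) ≤ u' r := by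
    intro r hr
    rw [← hu'a]
    exact le_of_neg_le_deriv_add_mul_div ha hr.1.le (by linarith)
      (div_nonneg (rpow_nonneg (hupos τ (right_mem_Ioc.2 haτ)).le p) hlam.le)
      (fun s hs ↦ hu' s ⟨hs.1, hs.2.trans hr.2.le⟩) fun s hs ↦ hradial s ⟨hs.1, hs.2.trans hr.2⟩
  have hintegrated := div_mul_rpow_sub_le_sub ha haτ.le (by linarith) hu hslope
  rw [show ntil - 1 - 1 = ntil - 2 by ring, show 1 - (ntil - 1) = 2 - ntil by ring, hua,
    sub_zero] at hintegrated
  calc _ = a ^ (ntil - 1) * α / (ntil - 2) * (a ^ (2 - ntil) - τ ^ (2 - ntil)) -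
        u τ ^ p / lam / 2 * (τ - a) ^ 2 := by ring
    _ ≤ u τ := hintegrated

/-- Estimate (2.8) in the paper: for `ñ₋ > 2` and any rising radial arc,
`u(τ) ≥ (a^{ñ₋−1} α/(ñ₋−2))(a^{2−ñ₋} − τ^{2−ñ₋}) − u(τ)^p (τ−a)²/(2λ)`. -/
theorem rising_arc_peak_second_lower_bound
    (n : ℕ) (hn : 2 ≤ n) (lam Lam p ntil : ℝ) (hlam : 0 < lam) (hlL : lam ≤ Lam) (hp : 1 < p)
    (hnt : ntil = Lam / lam * ((n : ℝ) - 1) + 1) (hnt2 : 2 < ntil)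
    (a τ α : ℝ) (u u' u'' : ℝ → ℝ)
    (harc : RisingArc n lam Lam p u u' u'' a τ α) :
    a ^ (ntil - 1) * α / (ntil - 2) * (a ^ (2 - ntil) - τ ^ (2 - ntil)) -
        u τ ^ p * (τ - a) ^ 2 / (2 * lam) ≤ u τ :=
  rising_arc_peak_second_lower_bound_general n lam Lam p ntil hlam hp hnt hnt2 a τ α u u' u'' harc
end

section
/- Fix a > 0 and M > 0. Then there exists δ > 0, depending only on M, a, n, p, λ and Λ, with the following property: whenever 0 < α ≤ M, ρ > a, and u : [a, ρ] → ℝ is twice continuously differentiable with u(a) = u(ρ) = 0, u'(a) = α, u(r) > 0 for all r ∈ (a, ρ), and u satisfies the Pucci differential inequalities at every r ∈ (a, ρ), then ρ ≥ a + δ. -/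
open Real Set

open Filter Topology in
private lemma deriv_le_zero_at_right (u u' : ℝ → ℝ) (a ρ : ℝ) (haρ : a < ρ)
    (hu : HasDerivAt u (u' ρ) ρ) (huρ : u ρ = 0)
    (hpos : ∀ r ∈ Ioo a ρ, 0 < u r) : u' ρ ≤ 0 := by
  have h : Tendsto (slope u ρ) (𝓝[<] ρ) (𝓝 (u' ρ)) :=
    (hasDerivAt_iff_tendsto_slope.mp hu).mono_left
      (nhdsWithin_mono ρ (fun x hx => ne_of_lt hx))
  refine le_of_tendsto h ?_
  filter_upwards [Ioo_mem_nhdsLT_of_mem ⟨haρ, le_refl ρ⟩] with y hy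
  have h1 : 0 < u y := hpos y hy
  have h2 : y - ρ ≤ 0 := by linarith [hy.2]
  rw [slope_def_field, huρ, sub_zero]
  exact div_nonpos_of_nonneg_of_nonpos (by linarith) h2

private lemma mono_aux {a t : ℝ} (hat : a < t) (f f' : ℝ → ℝ)
    (hf : ∀ x ∈ Icc a t, HasDerivAt f (f' x) x)
    (h0 : ∀ x ∈ Ioo a t, 0 ≤ f' x) : f a ≤ f t := by
  have hc : ContinuousOn f (Icc a t) := fun x hx =>
    (hf x hx).continuousAt.continuousWithinAt
  have hmono := monotoneOn_of_deriv_nonneg (convex_Icc a t) hc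
    (fun x hx => by
      rw [interior_Icc] at hx
      exact (hf x (Ioo_subset_Icc_self hx)).differentiableAt.differentiableWithinAt)
    (fun x hx => by
      rw [interior_Icc] at hx
      rw [(hf x (Ioo_subset_Icc_self hx)).deriv]
      exact h0 x hx)
  exact hmono (left_mem_Icc.mpr hat.le) (right_mem_Icc.mpr hat.le) hat.le

set_option maxHeartbeats 1000000 in
/-- Proposition 3.2 (i) (paper): for bounded initial slope `0 < α ≤ M`, the first return
radius `ρ` of a positive radial arc is uniformly bounded away from `a`: `ρ ≥ a + δ`,
with `δ` depending only on `M, a, n, p, λ, Λ`. -/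
theorem uniform_lower_bound_on_return_radius
    (n : ℕ) (hn : 2 ≤ n) (lam Lam p : ℝ) (hlam : 0 < lam) (hlL : lam ≤ Lam) (hp : 1 < p)
    (a M : ℝ) (ha : 0 < a) (hM : 0 < M) :
    ∃ δ : ℝ, 0 < δ ∧ ∀ (α ρ : ℝ) (u u' u'' : ℝ → ℝ),
      0 < α → α ≤ M → a < ρ →
      (∀ r ∈ Icc a ρ, HasDerivAt u (u' r) r) →
      (∀ r ∈ Icc a ρ, HasDerivAt u' (u'' r) r) →
      ContinuousOn u'' (Icc a ρ) →
      u a = 0 → u ρ = 0 → u' a = α →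
      (∀ r ∈ Ioo a ρ, 0 < u r) →
      (∀ r ∈ Ioo a ρ, PucciIneq n lam Lam p u u' u'' r) →
      a + δ ≤ ρ := by
  have hLam : 0 < Lam := lt_of_lt_of_le hlam hlL
  have hn1 : (1:ℝ) ≤ (n:ℝ) - 1 := by
    have : (2:ℝ) ≤ (n:ℝ) := by exact_mod_cast hn
    linarith
  have h2M : (0:ℝ) < 2*M := by linarith
  have hrp : (0:ℝ) ≤ (2*M)^(p-1) := Real.rpow_nonneg h2M.le _
  have hq : (0:ℝ) < 2*((n:ℝ)-1)*Lam/a := div_pos (by nlinarith) ha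
  set C : ℝ := (2*(2*M)^(p-1) + 2*((n:ℝ)-1)*Lam/a)/lam + 1 with hC
  have hDpos : (0:ℝ) < 2*(2*M)^(p-1) + 2*((n:ℝ)-1)*Lam/a := by linarith
  have hC1 : (1:ℝ) ≤ C := by
    have : 0 ≤ (2*(2*M)^(p-1) + 2*((n:ℝ)-1)*Lam/a)/lam := le_of_lt (div_pos hDpos hlam)
    rw [hC]; linarith
  have hCpos : (0:ℝ) < C := by linarith
  refine ⟨min 1 (1/(2*C)), lt_min one_pos (by positivity), ?_⟩
  intro α ρ u u' u'' hα hαM haρ hu hu' _hu''c hua huρ hu'a hupos hP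
  by_contra hcon
  push_neg at hcon
  clear_value C
  have h₁ : ρ < a + 1 := lt_of_lt_of_le hcon (by linarith [min_le_left (1:ℝ) (1/(2*C))])
  have h₂ : ρ - a < 1/(2*C) := by
    have := lt_of_lt_of_le hcon (by linarith [min_le_right (1:ℝ) (1/(2*C))] :
      a + min 1 (1/(2*C)) ≤ a + 1/(2*C))
    linarith
  have hCρ : C*(ρ-a) ≤ 1/2 := by
    have hkey : C * (1/(2*C)) = 1/2 := by
      field_simp
    have := mul_lt_mul_of_pos_left h₂ hCpos
    rw [hkey] at this
    linarith
  -- Key pointwise estimate on u''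
  have keyA : ∀ r ∈ Ioo a ρ, |u' r| ≤ 2*α → u r ≤ 2*α → |u'' r| ≤ α*(C-1) := by
    intro r hr hu'b hub
    have h := hP r hr
    unfold PucciIneq Pp Pm at h
    obtain ⟨h1, h2⟩ := h
    have hur : 0 < u r := hupos r hr
    have habs : |u r| = u r := abs_of_pos hur
    have hra : a < r := hr.1
    have hrpos : 0 < r := lt_trans ha hra
    have hterm0 : 0 ≤ |u r| ^ (p-1) * u r :=
      mul_nonneg (Real.rpow_nonneg (abs_nonneg _) _) hur.le
    have hterm : |u r| ^ (p-1) * u r ≤ (2*M)^(p-1) * (2*α) := by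
      rw [habs]
      have hu2M : u r ≤ 2*M := le_trans hub (by linarith)
      have hpow : (u r)^(p-1) ≤ (2*M)^(p-1) :=
        Real.rpow_le_rpow hur.le hu2M (by linarith)
      exact mul_le_mul hpow hub hur.le hrp
    have hy : |u' r / r| ≤ 2*α/a := by
      rw [abs_div, abs_of_pos hrpos]
      exact div_le_div₀ (by linarith) hu'b ha hra.le
    have hyl : -(2*α/a) ≤ u' r / r := (abs_le.mp hy).1
    have hyh : u' r / r ≤ 2*α/a := (abs_le.mp hy).2
    have hαa : (0:ℝ) ≤ 2*α/a := le_trans (abs_nonneg _) hy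
    have hL0 : (0:ℝ) ≤ (n:ℝ)-1 := by linarith
    have hLamq : (0:ℝ) ≤ ((n:ℝ)-1)*(Lam*(2*α/a)) :=
      mul_nonneg hL0 (mul_nonneg hLam.le hαa)
    have hA : ((n:ℝ)-1)*(Lam * max (u' r / r) 0 + lam * min (u' r / r) 0)
          ≤ ((n:ℝ)-1)*Lam*(2*α/a) ∧
        -(((n:ℝ)-1)*Lam*(2*α/a)) ≤
          ((n:ℝ)-1)*(Lam * max (u' r / r) 0 + lam * min (u' r / r) 0) := by
      rcases le_total 0 (u' r / r) with h|h
      · rw [max_eq_left h, min_eq_right h]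
        have k1 : ((n:ℝ)-1)*(Lam*(u' r / r)) ≤ ((n:ℝ)-1)*(Lam*(2*α/a)) :=
          mul_le_mul_of_nonneg_left (mul_le_mul_of_nonneg_left hyh hLam.le) hL0
        have k2 : 0 ≤ ((n:ℝ)-1)*(Lam*(u' r / r)) :=
          mul_nonneg hL0 (mul_nonneg hLam.le h)
        constructor <;> [linarith; linarith]
      · rw [max_eq_right h, min_eq_left h]
        have k1 : ((n:ℝ)-1)*(lam*(u' r / r)) ≤ 0 :=
          mul_nonpos_of_nonneg_of_nonpos hL0 (mul_nonpos_of_nonneg_of_nonpos hlam.le h)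
        have hz' : lam*(-(u' r / r)) ≤ Lam*(2*α/a) := by
          have a1 : lam*(-(u' r / r)) ≤ lam*(2*α/a) :=
            mul_le_mul_of_nonneg_left (by linarith) hlam.le
          have a2 : lam*(2*α/a) ≤ Lam*(2*α/a) :=
            mul_le_mul_of_nonneg_right hlL hαa
          linarith
        have k2 : ((n:ℝ)-1)*(lam*(-(u' r / r))) ≤ ((n:ℝ)-1)*(Lam*(2*α/a)) :=
          mul_le_mul_of_nonneg_left hz' hL0
        constructor <;> [linarith; linarith]
    have hB : ((n:ℝ)-1)*(lam * max (u' r / r) 0 + Lam * min (u' r / r) 0)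
          ≤ ((n:ℝ)-1)*Lam*(2*α/a) ∧
        -(((n:ℝ)-1)*Lam*(2*α/a)) ≤
          ((n:ℝ)-1)*(lam * max (u' r / r) 0 + Lam * min (u' r / r) 0) := by
      rcases le_total 0 (u' r / r) with h|h
      · rw [max_eq_left h, min_eq_right h]
        have hz' : lam*(u' r / r) ≤ Lam*(2*α/a) := by
          have a1 : lam*(u' r / r) ≤ lam*(2*α/a) :=
            mul_le_mul_of_nonneg_left hyh hlam.le
          have a2 : lam*(2*α/a) ≤ Lam*(2*α/a) :=
            mul_le_mul_of_nonneg_right hlL hαa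
          linarith
        have k1 : ((n:ℝ)-1)*(lam*(u' r / r)) ≤ ((n:ℝ)-1)*(Lam*(2*α/a)) :=
          mul_le_mul_of_nonneg_left hz' hL0
        have k2 : 0 ≤ ((n:ℝ)-1)*(lam*(u' r / r)) :=
          mul_nonneg hL0 (mul_nonneg hlam.le h)
        constructor <;> [linarith; linarith]
      · rw [max_eq_right h, min_eq_left h]
        have k1 : ((n:ℝ)-1)*(Lam*(u' r / r)) ≤ 0 :=
          mul_nonpos_of_nonneg_of_nonpos hL0 (mul_nonpos_of_nonneg_of_nonpos hLam.le h)
        have k2 : ((n:ℝ)-1)*(Lam*(-(u' r / r))) ≤ ((n:ℝ)-1)*(Lam*(2*α/a)) :=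
          mul_le_mul_of_nonneg_left (mul_le_mul_of_nonneg_left (by linarith) hLam.le) hL0
        constructor <;> [linarith; linarith]
    have hα2M : 0 ≤ α * (2*M)^(p-1) := mul_nonneg hα.le hrp
    have hαq : 0 ≤ α * (2*((n:ℝ)-1)*Lam/a) := mul_nonneg hα.le hq.le
    have hh : lam * u'' r ≤ α*(2*(2*M)^(p-1) + 2*((n:ℝ)-1)*Lam/a) := by
      rcases le_total 0 (u'' r) with hx|hx
      · rw [max_eq_left hx, min_eq_right hx] at h2
        have hfrac : ((n:ℝ)-1)*Lam*(2*α/a) = α*(2*((n:ℝ)-1)*Lam/a) := by ring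
        rw [hfrac] at hB
        linarith [hterm0, hB.2, h2]
      · have : lam * u'' r ≤ 0 := mul_nonpos_of_nonneg_of_nonpos hlam.le hx
        linarith
    have hl : -(α*(2*(2*M)^(p-1) + 2*((n:ℝ)-1)*Lam/a)) ≤ lam * u'' r := by
      rcases le_total 0 (u'' r) with hx|hx
      · have : 0 ≤ lam * u'' r := mul_nonneg hlam.le hx
        linarith
      · rw [max_eq_right hx, min_eq_left hx] at h1
        have hfrac : ((n:ℝ)-1)*Lam*(2*α/a) = α*(2*((n:ℝ)-1)*Lam/a) := by ring
        rw [hfrac] at hA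
        have hterm' : |u r| ^ (p-1) * u r ≤ α*(2*(2*M)^(p-1)) := by
          have : (2*M)^(p-1) * (2*α) = α*(2*(2*M)^(p-1)) := by ring
          linarith [hterm, this.ge]
        linarith [hA.1, h1, hterm']
    have hgoal : C - 1 = (2*(2*M)^(p-1) + 2*((n:ℝ)-1)*Lam/a) / lam := by rw [hC]; ring
    rw [hgoal, abs_le]
    constructor
    · have heq : -(α*((2*(2*M)^(p-1) + 2*((n:ℝ)-1)*Lam/a)/lam))
          = (-(α*(2*(2*M)^(p-1) + 2*((n:ℝ)-1)*Lam/a)))/lam := by ring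
      rw [heq, div_le_iff₀ hlam]
      linarith
    · have heq : α*((2*(2*M)^(p-1) + 2*((n:ℝ)-1)*Lam/a)/lam)
          = (α*(2*(2*M)^(p-1) + 2*((n:ℝ)-1)*Lam/a))/lam := by ring
      rw [heq, le_div_iff₀ hlam]
      linarith
  -- bound on u from bound on u'
  have ubnd : ∀ t ∈ Ioc a ρ, (∀ s ∈ Ioo a t, |u' s| ≤ 2*α) → u t ≤ 2*α := by
    intro t ht hb
    have hmono := mono_aux ht.1 (fun r => 2*α*r - u r) (fun r => 2*α*1 - u' r)
      (fun x hx => ((hasDerivAt_id x).const_mul (2*α)).sub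
        (hu x (Icc_subset_Icc_right ht.2 hx)))
      (fun x hx => by have := abs_le.mp (hb x hx); linarith [this.2])
    have hm : 2*α*a - u a ≤ 2*α*t - u t := hmono
    rw [hua] at hm
    have hta : t - a ≤ 1 := by linarith [ht.2]
    nlinarith [mul_le_mul_of_nonneg_left hta (by linarith : (0:ℝ) ≤ 2*α)]
  -- bound on u' from bound on u''
  have u'bnd : ∀ t ∈ Ioc a ρ, (∀ x ∈ Ioo a t, |u'' x| ≤ α*(C-1)) →
      |u' t - α| ≤ α*(C-1)*(t-a) := by
    intro t ht hb
    have hm1' := mono_aux ht.1 (fun r => α*(C-1)*r - u' r) (fun r => α*(C-1)*1 - u'' r)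
      (fun x hx => ((hasDerivAt_id x).const_mul (α*(C-1))).sub
        (hu' x (Icc_subset_Icc_right ht.2 hx)))
      (fun x hx => by have := abs_le.mp (hb x hx); linarith [this.2])
    have hm2' := mono_aux ht.1 (fun r => α*(C-1)*r + u' r) (fun r => α*(C-1)*1 + u'' r)
      (fun x hx => ((hasDerivAt_id x).const_mul (α*(C-1))).add
        (hu' x (Icc_subset_Icc_right ht.2 hx)))
      (fun x hx => by have := abs_le.mp (hb x hx); linarith [this.1])
    have hm1 : α*(C-1)*a - u' a ≤ α*(C-1)*t - u' t := hm1'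
    have hm2 : α*(C-1)*a + u' a ≤ α*(C-1)*t + u' t := hm2'
    rw [hu'a] at hm1 hm2
    rw [abs_le]
    constructor <;> [linarith; linarith]
  have hu'cont : ContinuousOn u' (Icc a ρ) := fun x hx =>
    (hu' x hx).continuousAt.continuousWithinAt
  -- bootstrap claim
  have claim1 : ∀ t ∈ Icc a ρ, |u' t| ≤ 2*α := by
    by_contra hcl
    push_neg at hcl
    obtain ⟨t, htmem, htgt⟩ := hcl
    set T : Set ℝ := {r ∈ Icc a ρ | 2*α ≤ |u' r|} with hT
    have hTne : T.Nonempty := ⟨t, htmem, htgt.le⟩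
    have hTeq : T = Icc a ρ ∩ (fun r => |u' r|) ⁻¹' Ici (2*α) := by
      ext r; simp [hT, Set.mem_sep_iff, Set.mem_preimage, Set.mem_Ici]
    have hTclosed : IsClosed T := by
      rw [hTeq]
      exact hu'cont.abs.preimage_isClosed_of_isClosed isClosed_Icc isClosed_Ici
    have hTbdd : BddBelow T := ⟨a, fun r hr => hr.1.1⟩
    set r₀ := sInf T with hr₀def
    have hr₀T : r₀ ∈ T := hTclosed.csInf_mem hTne hTbdd
    have har₀ : a < r₀ := by
      rcases lt_or_eq_of_le hr₀T.1.1 with h|h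
      · exact h
      · exfalso
        have h2 := hr₀T.2
        rw [← h, hu'a, abs_of_pos hα] at h2
        linarith
    have hr₀ρ : r₀ ≤ ρ := hr₀T.1.2
    have hbelow : ∀ s ∈ Ioo a r₀, |u' s| ≤ 2*α := by
      intro s hs
      by_contra hgt
      push_neg at hgt
      have hsT : s ∈ T := ⟨⟨hs.1.le, le_trans hs.2.le hr₀ρ⟩, hgt.le⟩
      have := csInf_le hTbdd hsT
      rw [← hr₀def] at this
      linarith [hs.2]
    have hub : ∀ s ∈ Ioo a r₀, u s ≤ 2*α := fun s hs =>
      ubnd s ⟨hs.1, le_trans hs.2.le hr₀ρ⟩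
        (fun x hx => hbelow x ⟨hx.1, lt_trans hx.2 hs.2⟩)
    have hu''b : ∀ x ∈ Ioo a r₀, |u'' x| ≤ α*(C-1) := fun x hx =>
      keyA x ⟨hx.1, lt_of_lt_of_le hx.2 hr₀ρ⟩ (hbelow x hx) (hub x hx)
    have hest := u'bnd r₀ ⟨har₀, hr₀ρ⟩ hu''b
    rw [abs_le] at hest
    have hC1' : (C-1)*(r₀-a) ≤ 1/2 := by
      have hh1 : (C-1)*(r₀-a) ≤ C*(r₀-a) :=
        mul_le_mul_of_nonneg_right (by linarith) (by linarith)
      have hh2 : C*(r₀-a) ≤ C*(ρ-a) :=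
        mul_le_mul_of_nonneg_left (by linarith) hCpos.le
      linarith
    have hfin : α*((C-1)*(r₀-a)) ≤ α*(1/2) := mul_le_mul_of_nonneg_left hC1' hα.le
    have h2 := hr₀T.2
    rcases abs_cases (u' r₀) with ⟨he,_⟩|⟨he,_⟩
    · rw [he] at h2
      nlinarith [hest.2]
    · rw [he] at h2
      nlinarith [hest.1]
  -- final contradiction
  have hub2 : ∀ s ∈ Ioo a ρ, u s ≤ 2*α := fun s hs =>
    ubnd s ⟨hs.1, hs.2.le⟩
      (fun x hx => claim1 x ⟨hx.1.le, le_trans hx.2.le hs.2.le⟩)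
  have hu''b2 : ∀ x ∈ Ioo a ρ, |u'' x| ≤ α*(C-1) := fun x hx =>
    keyA x hx (claim1 x ⟨hx.1.le, hx.2.le⟩) (hub2 x hx)
  have hest := u'bnd ρ ⟨haρ, le_refl ρ⟩ hu''b2
  rw [abs_le] at hest
  have hneg : u' ρ ≤ 0 :=
    deriv_le_zero_at_right u u' a ρ haρ (hu ρ (right_mem_Icc.mpr haρ.le)) huρ hupos
  have hC1'' : (C-1)*(ρ-a) ≤ 1/2 := by
    have hh1 : (C-1)*(ρ-a) ≤ C*(ρ-a) :=
      mul_le_mul_of_nonneg_right (by linarith) (by linarith)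
    linarith
  have hfin : α*((C-1)*(ρ-a)) ≤ α*(1/2) := mul_le_mul_of_nonneg_left hC1'' hα.le
  nlinarith [hest.1]
end
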